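/- arXiv:1006.1548 — 7 statements merged into one kernel-verified Lean document; each statement's English description precedes it below -/
import Mathlib

section
/- Let N be a prime number and let F ∈ ℂ^{N×N} be the N-point unitary DFT matrix. Then for any row-index set R ⊆ {0,…,N−1} and any column-index set C ⊆ {0,…,N−1} with |R| = |C|, the square submatrix F(R,C) is invertible (equivalently, det F(R,C) ≠ 0). -/
set_option maxHeartbeats 1000000

open Matrix Complex

namespace ChebAux
open Polynomial

variable {R : Type*} [CommRing R]

/-- The operator `f ↦ X * f'` as an `R`-linear endomorphism of `R[X]`. -/
noncomputable def theta : Module.End R (Polynomial R) :=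
  (LinearMap.mulLeft R (X : R[X])).comp (derivative : R[X] →ₗ[R] R[X])

lemma theta_apply (f : R[X]) : (theta : Module.End R R[X]) f = X * derivative f := rfl

lemma theta_pow_succ_apply (k : ℕ) (f : R[X]) :
    ((theta : Module.End R R[X]) ^ (k + 1)) f = theta (((theta : Module.End R R[X]) ^ k) f) := by
  rw [pow_succ']; rfl

lemma theta_X_mul (g : R[X]) :
    (theta : Module.End R R[X]) (X * g) = X * g + X * theta g := by
  simp only [theta_apply, derivative_mul, derivative_X, one_mul]
  ring

lemma theta_Xsub_mul (r : R) (g : R[X]) :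
    (theta : Module.End R R[X]) ((X - C r) * g) = X * g + (X - C r) * theta g := by
  simp only [theta_apply, derivative_mul, derivative_sub, derivative_X, derivative_C,
    sub_zero, one_mul]
  ring

lemma theta_monomial (a : R) (m : ℕ) :
    (theta : Module.End R R[X]) (C a * X ^ m) = m • (C a * X ^ m) := by
  cases m with
  | zero => simp [theta_apply]
  | succ m =>
      rw [theta_apply, derivative_C_mul, derivative_X_pow, Nat.add_sub_cancel, nsmul_eq_mul]
      push_cast [Polynomial.C_add, Polynomial.C_eq_natCast, Polynomial.C_1]
      ring

lemma theta_pow_monomial (k : ℕ) (a : R) (m : ℕ) :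
    ((theta : Module.End R R[X]) ^ k) (C a * X ^ m) = m ^ k • (C a * X ^ m) := by
  induction k with
  | zero => simp
  | succ k ih =>
      rw [theta_pow_succ_apply, ih, map_nsmul, theta_monomial, smul_smul, pow_succ]

lemma eval_theta_pow_sum {ι : Type*} (s : Finset ι) (w : ι → R) (e : ι → ℕ) (k : ℕ) :
    Polynomial.eval 1 (((theta : Module.End R R[X]) ^ k) (∑ j ∈ s, C (w j) * X ^ e j)) =
      ∑ j ∈ s, w j * ((e j : R)) ^ k := by
  rw [map_sum, eval_finset_sum]
  refine Finset.sum_congr rfl fun j _ => ?_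
  rw [theta_pow_monomial]
  simp only [nsmul_eq_mul, eval_mul, eval_natCast, eval_C, eval_pow, eval_X, one_pow, mul_one]
  push_cast
  ring

lemma theta_pow_Xsub_mul_structure (r : R) (h : R[X]) (k : ℕ) :
    ((theta : Module.End R R[X]) ^ k) ((X - C r) * h) -
        (X - C r) * ((theta : Module.End R R[X]) ^ k) h ∈
      Submodule.span R ((fun l => X * ((theta : Module.End R R[X]) ^ l) h) '' Set.Iio k) := by
  induction k with
  | zero => simp
  | succ k ih =>
      have hmono : Submodule.span R ((fun l => X * ((theta : Module.End R R[X]) ^ l) h) '' Set.Iio k)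
          ≤ Submodule.span R ((fun l => X * ((theta : Module.End R R[X]) ^ l) h) '' Set.Iio (k+1)) :=
        Submodule.span_mono (Set.image_mono fun l hl => lt_trans hl (Nat.lt_succ_self k))
      have step : ∀ z ∈ Submodule.span R
            ((fun l => X * ((theta : Module.End R R[X]) ^ l) h) '' Set.Iio k),
          (theta : Module.End R R[X]) z ∈ Submodule.span R
            ((fun l => X * ((theta : Module.End R R[X]) ^ l) h) '' Set.Iio (k+1)) := by
        intro z hz
        induction hz using Submodule.span_induction with
        | mem x hx =>
            obtain ⟨l, hl, rfl⟩ := hx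
            rw [theta_X_mul, ← theta_pow_succ_apply]
            exact add_mem
              (Submodule.subset_span ⟨l, lt_trans hl (Nat.lt_succ_self k), rfl⟩)
              (Submodule.subset_span ⟨l + 1, Nat.succ_lt_succ hl, rfl⟩)
        | zero => simp
        | add x y _ _ hx hy => rw [map_add]; exact add_mem hx hy
        | smul c x _ hx => rw [_root_.map_smul]; exact Submodule.smul_mem _ c hx
      have hB : (theta : Module.End R R[X]) ((X - C r) * ((theta ^ k : Module.End R R[X]) h)) =
          X * ((theta : Module.End R R[X]) ^ k) h +
            (X - C r) * ((theta : Module.End R R[X]) ^ (k+1)) h := by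
        rw [theta_Xsub_mul, theta_pow_succ_apply]
      have h1 : ((theta : Module.End R R[X]) ^ (k+1)) ((X - C r) * h) -
            (X - C r) * ((theta : Module.End R R[X]) ^ (k+1)) h =
          (theta : Module.End R R[X]) (((theta : Module.End R R[X]) ^ k) ((X - C r) * h) -
            (X - C r) * ((theta : Module.End R R[X]) ^ k) h) +
            X * ((theta : Module.End R R[X]) ^ k) h := by
        rw [theta_pow_succ_apply, map_sub, hB]
        ring
      rw [h1]
      exact add_mem (step _ ih)
        (Submodule.subset_span ⟨k, Nat.lt_succ_self k, rfl⟩)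

lemma dvd_eval_of_mem_span {d : R} {S : Set R[X]} (hS : ∀ s ∈ S, d ∣ Polynomial.eval 1 s)
    {z : R[X]} (hz : z ∈ Submodule.span R S) : d ∣ Polynomial.eval 1 z := by
  induction hz using Submodule.span_induction with
  | mem x hx => exact hS x hx
  | zero => simp
  | add x y _ _ hx hy => rw [eval_add]; exact dvd_add hx hy
  | smul c x _ hx => rw [eval_smul, smul_eq_mul]; exact hx.mul_left c

lemma good_Xsub_mul {d r : R} (hr : d ∣ 1 - r) {n : ℕ} {h : R[X]}
    (hh : ∀ k < n, d ∣ Polynomial.eval 1 (((theta : Module.End R R[X]) ^ k) h)) :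
    ∀ k < n + 1, d ∣ Polynomial.eval 1 (((theta : Module.End R R[X]) ^ k) ((X - C r) * h)) := by
  intro k hk
  have hst := theta_pow_Xsub_mul_structure r h k
  have hid : Polynomial.eval 1 (((theta : Module.End R R[X]) ^ k) ((X - C r) * h)) =
      (1 - r) * Polynomial.eval 1 (((theta : Module.End R R[X]) ^ k) h) +
        Polynomial.eval 1 (((theta : Module.End R R[X]) ^ k) ((X - C r) * h) -
          (X - C r) * ((theta : Module.End R R[X]) ^ k) h) := by
    rw [eval_sub, eval_mul, eval_sub, eval_X, eval_C]
    ring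
  rw [hid]
  refine dvd_add (hr.mul_right _) (dvd_eval_of_mem_span ?_ hst)
  rintro s ⟨l, hl, rfl⟩
  have hl' : l < n := lt_of_lt_of_le hl (Nat.lt_succ_iff.mp hk)
  simpa [eval_mul] using hh l hl'

lemma good_prod {d : R} {ι : Type*} (s : Finset ι) (ρ : ι → R) (g : R[X]) :
    (∀ i ∈ s, d ∣ 1 - ρ i) →
    ∀ k < s.card, d ∣ Polynomial.eval 1
      (((theta : Module.End R R[X]) ^ k) ((∏ i ∈ s, (X - C (ρ i))) * g)) := by
  induction s using Finset.cons_induction with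
  | empty => intro _ k hk; exact absurd hk (Nat.not_lt_zero k)
  | cons a s ha ih =>
      intro hρ
      rw [Finset.prod_cons, mul_assoc, Finset.card_cons]
      exact good_Xsub_mul (hρ a (Finset.mem_cons_self a s))
        (ih (fun i hi => hρ i (Finset.mem_cons_of_mem hi)))

lemma prod_X_sub_C_dvd {R : Type*} [CommRing R] [IsDomain R] {ι : Type*} (s : Finset ι)
    (ρ : ι → R) (hinj : Set.InjOn ρ s) :
    ∀ f : R[X], (∀ i ∈ s, f.eval (ρ i) = 0) → (∏ i ∈ s, (X - C (ρ i))) ∣ f := by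
  induction s using Finset.cons_induction with
  | empty => intro f _; simp
  | cons a s ha ih =>
      intro f hroot
      have h1 : (X - C (ρ a)) ∣ f := dvd_iff_isRoot.mpr (hroot a (Finset.mem_cons_self a s))
      obtain ⟨g, rfl⟩ := h1
      rw [Finset.prod_cons]
      refine mul_dvd_mul_left _ (ih (hinj.mono (Finset.coe_subset.mpr (Finset.subset_cons ha))) g ?_)
      · intro i hi
        have h0 := hroot i (Finset.mem_cons_of_mem hi)
        rw [eval_mul, eval_sub, eval_X, eval_C] at h0
        rcases mul_eq_zero.mp h0 with h | h
        · exfalso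
          have : ρ i = ρ a := by linear_combination h
          have : i = a := hinj (by simp [hi]) (by simp) this
          exact ha (this ▸ hi)
        · exact h

end ChebAux

namespace ChebAux
open Polynomial

/-- Abstract core of Frenkel's proof of Chebotarev's theorem. -/
theorem det_pow_matrix_ne_zero_abstract {R : Type*} [CommRing R] [IsDomain R] [WfDvdMonoid R]
    {n p : ℕ} (hp : p.Prime) (ζ : R) (hαne : ζ - 1 ≠ 0) (hα_nu : ¬IsUnit (ζ - 1))
    (hα_p : ζ - 1 ∣ ((p : ℕ) : R))
    (hζinj : ∀ a b : ℕ, a < p → b < p → ζ ^ a = ζ ^ b → a = b)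
    (x y : Fin n → Fin p) (hx : Function.Injective x) (hy : Function.Injective y) :
    (Matrix.of fun i j : Fin n => ζ ^ ((x i : ℕ) * (y j : ℕ))).det ≠ 0 := by
  set α : R := ζ - 1 with hαdef
  set A : Matrix (Fin n) (Fin n) R :=
    Matrix.of (fun i j : Fin n => ζ ^ ((x i : ℕ) * (y j : ℕ))) with hA
  intro hdetA
  obtain ⟨v, hv, hAv⟩ := (Matrix.exists_mulVec_eq_zero_iff).mpr hdetA
  obtain ⟨j₀, hj₀0⟩ := Function.ne_iff.mp hv
  have hj₀ : v j₀ ≠ 0 := by simpa using hj₀0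
  have hα_pow : ∀ m : ℕ, α ∣ 1 - ζ ^ m := by
    intro m
    have h1 : α ∣ ζ ^ m - 1 := by
      simpa using sub_dvd_pow_sub_pow ζ 1 m
    rw [show (1 - ζ ^ m) = -(ζ ^ m - 1) by ring]
    exact h1.neg_right
  -- the key step: every kernel vector has all coordinates divisible by α
  have key : ∀ w : Fin n → R, A.mulVec w = 0 → ∀ j, α ∣ w j := by
    intro w hw j
    set f : Polynomial R := ∑ j' : Fin n, C (w j') * X ^ ((y j' : ℕ)) with hf
    have hroot : ∀ i : Fin n, f.eval (ζ ^ (x i : ℕ)) = 0 := by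
      intro i
      have hwi := congrFun hw i
      simp only [Matrix.mulVec, dotProduct, hA, Matrix.of_apply, Pi.zero_apply] at hwi
      rw [hf, eval_finset_sum]
      rw [← hwi]
      refine Finset.sum_congr rfl fun j' _ => ?_
      rw [eval_mul, eval_C, eval_pow, eval_X, ← pow_mul, mul_comm]
    have hinj : Set.InjOn (fun i : Fin n => ζ ^ (x i : ℕ)) (Finset.univ : Finset (Fin n)) := by
      intro i _ i' _ hii'
      exact hx (Fin.ext (hζinj _ _ (x i).isLt (x i').isLt hii'))
    obtain ⟨g, hg⟩ := prod_X_sub_C_dvd Finset.univ (fun i : Fin n => ζ ^ (x i : ℕ)) hinj f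
      (fun i _ => hroot i)
    have hgood : ∀ k < n, α ∣ Polynomial.eval 1 (((theta : Module.End R R[X]) ^ k) f) := by
      intro k hk
      rw [hg]
      refine good_prod Finset.univ (fun i : Fin n => ζ ^ (x i : ℕ)) g
        (fun i _ => hα_pow (x i : ℕ)) k ?_
      rwa [Finset.card_univ, Fintype.card_fin]
    have hsum : ∀ k < n, α ∣ ∑ j' : Fin n, w j' * (((y j' : ℕ) : R)) ^ k := by
      intro k hk
      have := hgood k hk
      rwa [hf, eval_theta_pow_sum] at this
    -- Vandermonde extraction
    set V : Matrix (Fin n) (Fin n) R :=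
      Matrix.of (fun k j' : Fin n => (((y j' : ℕ) : R)) ^ (k : ℕ)) with hV
    have hVw : ∀ k : Fin n, α ∣ V.mulVec w k := by
      intro k
      have := hsum (k : ℕ) k.isLt
      simp only [Matrix.mulVec, dotProduct, hV, Matrix.of_apply]
      convert this using 2 with j'
      ring
    have hdvdDet : α ∣ V.det * w j := by
      have hsmul : V.det • w = (V.adjugate).mulVec (V.mulVec w) := by
        rw [Matrix.mulVec_mulVec, Matrix.adjugate_mul, Matrix.smul_mulVec,
          Matrix.one_mulVec]
      have hj : V.det * w j = ∑ k : Fin n, V.adjugate j k * (V.mulVec w) k := by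
        have := congrFun hsmul j
        simpa [Matrix.mulVec, dotProduct, smul_eq_mul] using this
      rw [hj]
      exact Finset.dvd_sum fun k _ => (hVw k).mul_left _
    -- relate det V to an integer not divisible by p
    set d : ℤ := (Matrix.vandermonde (fun j' : Fin n => ((y j' : ℕ) : ℤ))).det with hd
    have hVd : V.det = ((d : ℤ) : R) := by
      have hVeq : V = ((Int.castRingHom R).mapMatrix
          (Matrix.vandermonde fun j' : Fin n => ((y j' : ℕ) : ℤ)))ᵀ := by
        ext k j'
        simp [hV, Matrix.vandermonde]
      rw [hVeq, Matrix.det_transpose]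
      exact (RingHom.map_det (Int.castRingHom R) _).symm
    have hpd : ¬ ((p : ℤ) ∣ d) := by
      haveI : Fact p.Prime := ⟨hp⟩
      intro hdvd
      have h0 : ((d : ℤ) : ZMod p) = 0 := (ZMod.intCast_zmod_eq_zero_iff_dvd d p).mpr hdvd
      have hdz : ((d : ℤ) : ZMod p) =
          (Matrix.vandermonde (fun j' : Fin n => ((y j' : ℕ) : ZMod p))).det := by
        have h1 := RingHom.map_det (Int.castRingHom (ZMod p))
          (Matrix.vandermonde fun j' : Fin n => ((y j' : ℕ) : ℤ))
        rw [hd]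
        refine Eq.trans ?_ (h1.trans ?_)
        · rfl
        · congr 1
          ext i j'
          simp [Matrix.vandermonde]
      rw [hdz] at h0
      obtain ⟨i, j', hij, hne⟩ := Matrix.det_vandermonde_eq_zero_iff.mp h0
      apply hne
      apply hy
      apply Fin.ext
      have h1 : ((y i : ℕ) : ZMod p).val = ((y j' : ℕ) : ZMod p).val := by rw [hij]
      rwa [ZMod.val_cast_of_lt (y i).isLt, ZMod.val_cast_of_lt (y j').isLt] at h1
    -- p is coprime to d; combine divisibilities
    have hcop : IsCoprime d ((p : ℕ) : ℤ) := by
      rw [Int.isCoprime_iff_gcd_eq_one]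
      have hnd : ¬ p ∣ d.natAbs := by
        intro hdd
        exact hpd (dvd_trans (Int.natCast_dvd_natCast.mpr hdd) (Int.natAbs_dvd.mpr dvd_rfl))
      have := (Nat.Prime.coprime_iff_not_dvd hp).mpr hnd
      simpa [Int.gcd, Nat.coprime_comm] using this
    obtain ⟨a, b, hab⟩ := hcop
    have hone : ((a * d + b * (p : ℕ) : ℤ) : R) = 1 := by rw [hab]; simp
    have hexp : w j = (a : R) * (((d : ℤ) : R) * w j) +
        (b : R) * (((p : ℕ) : R) * w j) := by
      calc w j = ((a * d + b * (p : ℕ) : ℤ) : R) * w j := by rw [hone, one_mul]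
        _ = (a : R) * (((d : ℤ) : R) * w j) + (b : R) * (((p : ℕ) : R) * w j) := by
            push_cast
            ring
    rw [hexp]
    exact dvd_add ((hVd ▸ hdvdDet).mul_left _) ((hα_p.mul_right (w j)).mul_left _)
  -- infinite descent using well-foundedness of strict divisibility
  have main : ∀ a : R, ∀ w : Fin n → R, A.mulVec w = 0 → w j₀ = a → a = 0 := by
    intro a
    refine WellFounded.induction
      (C := fun aa : R => ∀ w : Fin n → R, A.mulVec w = 0 → w j₀ = aa → aa = 0)
      wellFounded_dvdNotUnit a ?_
    intro bb IH w hw hwj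
    by_contra hb
    set u : Fin n → R := fun j => (key w hw j).choose with hu
    have huspec : ∀ j, w j = α * u j := fun j => (key w hw j).choose_spec
    have hAu : A.mulVec u = 0 := by
      funext i
      have hwi := congrFun hw i
      simp only [Matrix.mulVec, dotProduct, Pi.zero_apply] at hwi ⊢
      have hfac : ∑ j, A i j * w j = α * ∑ j, A i j * u j := by
        rw [Finset.mul_sum]
        refine Finset.sum_congr rfl fun j _ => ?_
        rw [huspec j]; ring
      rw [hfac] at hwi
      rcases mul_eq_zero.mp hwi with h | h
      · exact absurd h hαne
      · exact h
    have hune : u j₀ ≠ 0 := by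
      intro h0
      apply hb
      rw [← hwj, huspec j₀, h0, mul_zero]
    have hdnu : DvdNotUnit (u j₀) bb := by
      refine ⟨hune, α, hα_nu, ?_⟩
      rw [← hwj, huspec j₀]; ring
    exact hune (IH (u j₀) hdnu u hAu rfl)
  exact hj₀ (main (v j₀) v hAv rfl)

end ChebAux

namespace ChebAux
open Polynomial

/-- **Chebotarev's theorem**, complex version. -/
theorem det_pow_matrix_ne_zero {p n : ℕ} (hp : p.Prime) {ω : ℂ} (hω : IsPrimitiveRoot ω p)
    (x y : Fin n → Fin p) (hx : Function.Injective x) (hy : Function.Injective y) :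
    (Matrix.of fun i j : Fin n => ω ^ ((x i : ℕ) * (y j : ℕ))).det ≠ 0 := by
  haveI : Fact p.Prime := ⟨hp⟩
  let Rs : Subalgebra ℤ ℂ := Algebra.adjoin ℤ ({ω} : Set ℂ)
  haveI hft : Algebra.FiniteType ℤ ↥Rs :=
    (Subalgebra.fg_iff_finiteType Rs).mp ⟨{ω}, by simp [Rs]⟩
  haveI : IsNoetherianRing ↥Rs := Algebra.FiniteType.isNoetherianRing ℤ ↥Rs
  haveI : WfDvdMonoid ↥Rs := IsNoetherianRing.wfDvdMonoid
  let ζ : ↥Rs := ⟨ω, Algebra.subset_adjoin (Set.mem_singleton ω)⟩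
  have hζω : (ζ : ℂ) = ω := rfl
  have hαne : ζ - 1 ≠ 0 := by
    rw [sub_ne_zero]
    intro h
    exact hω.ne_one hp.one_lt (by rw [← hζω, h]; rfl)
  have hα_p : ζ - 1 ∣ ((p : ℕ) : ↥Rs) := by
    set W : Polynomial ↥Rs := (cyclotomic p ℤ).map (algebraMap ℤ ↥Rs) with hW
    have h1 : W.eval ζ = 0 := by
      apply Subtype.val_injective
      have e1 : W.eval ζ = aeval ζ (cyclotomic p ℤ) := by rw [hW, eval_map, aeval_def]
      have e2 : (Subalgebra.val Rs) (aeval ζ (cyclotomic p ℤ)) = aeval ω (cyclotomic p ℤ) :=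
        (aeval_algHom_apply (Subalgebra.val Rs) ζ (cyclotomic p ℤ)).symm
      rw [e1]
      show (Subalgebra.val Rs) (aeval ζ (cyclotomic p ℤ)) = _
      rw [e2, cyclotomic_eq_minpoly hω hp.pos, minpoly.aeval]
      simp
    have h2 : W.eval 1 = ((p : ℕ) : ↥Rs) := by
      rw [hW, eval_map, eval₂_at_one, eval_one_cyclotomic_prime]
      simp
    have h3 := sub_dvd_eval_sub ζ 1 W
    rw [h1, h2, zero_sub] at h3
    exact dvd_neg.mp h3
  have hα_nu : ¬ IsUnit (ζ - 1) := by
    intro hu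
    obtain ⟨u, hu'⟩ := hu.exists_right_inv
    have hmem : (u : ℂ) ∈ Algebra.adjoin ℤ ({ω} : Set ℂ) := u.2
    rw [Algebra.adjoin_singleton_eq_range_aeval] at hmem
    obtain ⟨g, hg⟩ := hmem
    have h0 : aeval ω ((X - 1) * g - 1) = 0 := by
      have hval : (((ζ - 1) * u : ↥Rs) : ℂ) = 1 := by rw [hu']; rfl
      have h2 : (ω - 1) * (u : ℂ) - 1 = 0 := by
        rw [show (ω - 1) * (u : ℂ) = (((ζ - 1) * u : ↥Rs) : ℂ) by push_cast [hζω]; ring]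
        rw [hval]; ring
      rw [← hg] at h2
      simpa using h2
    have hdvd : minpoly ℤ ω ∣ (X - 1) * g - 1 :=
      minpoly.isIntegrallyClosed_dvd (hω.isIntegral hp.pos) h0
    rw [← cyclotomic_eq_minpoly hω hp.pos] at hdvd
    obtain ⟨t, ht⟩ := hdvd
    have hev := congrArg (Polynomial.eval 1) ht
    rw [eval_mul, eval_one_cyclotomic_prime] at hev
    simp only [eval_sub, eval_mul, eval_one, eval_X, sub_self, zero_mul, zero_sub] at hev
    have hpd1 : (p : ℤ) ∣ 1 := ⟨-(Polynomial.eval 1 t), by linarith⟩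
    have hle := Int.le_of_dvd one_pos hpd1
    have h2p : 2 ≤ p := hp.two_le
    omega
  have hζinj : ∀ a b : ℕ, a < p → b < p → ζ ^ a = ζ ^ b → a = b := by
    intro a b ha hb hab
    apply hω.pow_inj ha hb
    have := congrArg (Subtype.val) hab
    push_cast at this
    exact this
  have habs := det_pow_matrix_ne_zero_abstract hp ζ hαne hα_nu hα_p hζinj x y hx hy
  intro h0
  apply habs
  have hmap : (Subalgebra.val Rs).mapMatrix
      (Matrix.of fun i j : Fin n => ζ ^ ((x i : ℕ) * (y j : ℕ))) =
      (Matrix.of fun i j : Fin n => ω ^ ((x i : ℕ) * (y j : ℕ))) := by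
    ext i j
    simp [hζω]
  apply Subtype.val_injective
  show (Subalgebra.val Rs) (Matrix.of fun i j : Fin n => ζ ^ ((x i : ℕ) * (y j : ℕ))).det
      = (Subalgebra.val Rs) 0
  rw [AlgHom.map_det, hmap, map_zero, h0]

end ChebAux

/-- The `N`-point unitary DFT matrix: `F j k = N^{-1/2} exp(-2πi jk/N)`. -/
noncomputable def dftMatrix (N : ℕ) : Matrix (Fin N) (Fin N) ℂ :=
  Matrix.of fun j k : Fin N =>
    (1 / Real.sqrt N : ℝ) *
      Complex.exp (-2 * Real.pi * Complex.I * (j : ℕ) * (k : ℕ) / (N : ℕ))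

/-- **Chebotarev's theorem.**  If `N` is prime then every square submatrix of the
`N`-point unitary DFT matrix, obtained by keeping a set of rows `R` (encoded by the
embedding `r`) and a set of columns `C` (encoded by the embedding `c`) with
`|R| = |C| = P`, is invertible; equivalently, its determinant is nonzero. -/
theorem dft_square_submatrix_invertible (N P : ℕ) (hN : N.Prime)
    (r : Fin P ↪ Fin N) (c : Fin P ↪ Fin N) :
    IsUnit ((dftMatrix N).submatrix r c) ∧ ((dftMatrix N).submatrix r c).det ≠ 0 := by
  set ω : ℂ := Complex.exp (-(2 * Real.pi * Complex.I) / N) with hωdef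
  have hω : IsPrimitiveRoot ω N := by
    have h1 := (Complex.isPrimitiveRoot_exp N hN.ne_zero).inv
    have h2 : (Complex.exp (2 * Real.pi * Complex.I / N))⁻¹ = ω := by
      rw [← Complex.exp_neg, hωdef]
      ring_nf
    rwa [h2] at h1
  have hM : (dftMatrix N).submatrix r c =
      ((1 / Real.sqrt N : ℝ) : ℂ) •
        Matrix.of (fun i j : Fin P => ω ^ ((r i : ℕ) * (c j : ℕ))) := by
    ext i j
    simp only [dftMatrix, Matrix.submatrix_apply, Matrix.smul_apply, Matrix.of_apply,
      smul_eq_mul]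
    congr 1
    rw [hωdef, ← Complex.exp_nat_mul]
    congr 1
    push_cast
    ring
  have hdet : ((dftMatrix N).submatrix r c).det ≠ 0 := by
    rw [hM, Matrix.det_smul]
    refine mul_ne_zero (pow_ne_zero _ ?_) ?_
    · rw [ne_eq, Complex.ofReal_eq_zero]
      have hNpos : (0 : ℝ) < N := by exact_mod_cast hN.pos
      have : 0 < Real.sqrt N := Real.sqrt_pos.mpr hNpos
      positivity
    · exact ChebAux.det_pow_matrix_ne_zero hN hω (⇑r) (⇑c) r.injective c.injective
  exact ⟨(Matrix.isUnit_iff_isUnit_det _).mpr (isUnit_iff_ne_zero.mpr hdet), hdet⟩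
end

section
/- Let P ≥ S ≥ 1 be integers, let ρ > 0 and N > 0 be real numbers, and let A ∈ ℂ^{P×S} have rank S with singular values σ_1,…,σ_S > 0. Set c = S/(ρN) and G = I_S − Aᴴ(AAᴴ + c·I_P)^{-1}A. Then (1/S)·tr(G·Gᴴ) + (1/(ρN))·tr(Aᴴ(AAᴴ + c·I_P)^{-2}A) = Σ_{l=1}^{S} 1/(N·σ_l²·ρ + S). -/
open Matrix Complex

section MMSEAux

lemma mmse_aux_star_mul {n : Type*} [DecidableEq n] [Fintype n]
    (W : Matrix.unitaryGroup n ℂ) :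
    (W : Matrix n n ℂ)ᴴ * (W : Matrix n n ℂ) = 1 := by
  have := Matrix.UnitaryGroup.star_mul_self W
  simpa [Matrix.star_eq_conjTranspose] using this

lemma mmse_aux_mul_star {n : Type*} [DecidableEq n] [Fintype n]
    (W : Matrix.unitaryGroup n ℂ) :
    (W : Matrix n n ℂ) * (W : Matrix n n ℂ)ᴴ = 1 := by
  have := Matrix.mem_unitaryGroup_iff.mp W.2
  simpa [Matrix.star_eq_conjTranspose] using this

/-- Conjugation by a unitary is multiplicative. -/
lemma mmse_aux_conj_mul {n : Type*} [DecidableEq n] [Fintype n]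
    (W : Matrix.unitaryGroup n ℂ) (E F : Matrix n n ℂ) :
    ((W : Matrix n n ℂ) * E * (W : Matrix n n ℂ)ᴴ) *
      ((W : Matrix n n ℂ) * F * (W : Matrix n n ℂ)ᴴ) =
    (W : Matrix n n ℂ) * (E * F) * (W : Matrix n n ℂ)ᴴ := by
  have h := mmse_aux_star_mul W
  calc ((W : Matrix n n ℂ) * E * (W : Matrix n n ℂ)ᴴ) *
      ((W : Matrix n n ℂ) * F * (W : Matrix n n ℂ)ᴴ)
      = (W : Matrix n n ℂ) * E * (((W : Matrix n n ℂ)ᴴ * (W : Matrix n n ℂ)) *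
          (F * (W : Matrix n n ℂ)ᴴ)) := by
        simp only [Matrix.mul_assoc]
    _ = (W : Matrix n n ℂ) * (E * F) * (W : Matrix n n ℂ)ᴴ := by
        rw [h]; simp only [Matrix.one_mul, Matrix.mul_assoc]

lemma mmse_aux_trace_conj {n : Type*} [DecidableEq n] [Fintype n]
    (W : Matrix.unitaryGroup n ℂ) (E : Matrix n n ℂ) :
    Matrix.trace ((W : Matrix n n ℂ) * E * (W : Matrix n n ℂ)ᴴ) = Matrix.trace E := by
  rw [Matrix.trace_mul_cycle, mmse_aux_star_mul W, Matrix.one_mul]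

end MMSEAux

/-- Exact expression for the conditional MSE of the pilot-aided MMSE channel estimate
under the correct support hypothesis.  Here `A ∈ ℂ^{P×S}` has rank `S`, with singular
value decomposition `A = U Σ Vᴴ` where the singular values `σ l` are all positive,
`c = S/(ρN)`, and `G = I − Aᴴ(AAᴴ + c I)⁻¹ A`.  Then
`(1/S)·tr(G Gᴴ) + (1/(ρN))·tr(Aᴴ (AAᴴ + c I)⁻² A) = ∑_l 1/(N σ_l² ρ + S)`. -/
theorem mmse_correct_support_exact (P S : ℕ) (hS : 1 ≤ S) (hPS : S ≤ P)
    (ρ N : ℝ) (hρ : 0 < ρ) (hN : 0 < N)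
    (A : Matrix (Fin P) (Fin S) ℂ) (hrank : A.rank = S)
    (σ : Fin S → ℝ) (hσ : ∀ l, 0 < σ l)
    (U : Matrix.unitaryGroup (Fin P) ℂ) (V : Matrix.unitaryGroup (Fin S) ℂ)
    (hA : A = (U : Matrix (Fin P) (Fin P) ℂ) *
        (Matrix.of fun (i : Fin P) (j : Fin S) => if (i : ℕ) = (j : ℕ) then ((σ j : ℝ) : ℂ) else 0) *
        (V : Matrix (Fin S) (Fin S) ℂ)ᴴ) :
    (1 / (S : ℂ)) *
        Matrix.trace
          (((1 : Matrix (Fin S) (Fin S) ℂ) -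
              Aᴴ * (A * Aᴴ + (((S : ℝ) / (ρ * N) : ℝ) : ℂ) • 1)⁻¹ * A) *
            ((1 : Matrix (Fin S) (Fin S) ℂ) -
              Aᴴ * (A * Aᴴ + (((S : ℝ) / (ρ * N) : ℝ) : ℂ) • 1)⁻¹ * A)ᴴ) +
      (1 / ((ρ : ℂ) * (N : ℂ))) *
        Matrix.trace
          (Aᴴ * ((A * Aᴴ + (((S : ℝ) / (ρ * N) : ℝ) : ℂ) • 1)⁻¹ *
              (A * Aᴴ + (((S : ℝ) / (ρ * N) : ℝ) : ℂ) • 1)⁻¹) * A) =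
      ((∑ l : Fin S, 1 / (N * (σ l) ^ 2 * ρ + S) : ℝ) : ℂ) := by
  classical
  -- abbreviations
  set c : ℝ := (S : ℝ) / (ρ * N) with hc_def
  have hρN : 0 < ρ * N := mul_pos hρ hN
  have hSpos : (0 : ℝ) < S := by exact_mod_cast hS
  have hc : 0 < c := div_pos hSpos hρN
  set D : Matrix (Fin P) (Fin S) ℂ :=
    Matrix.of fun (i : Fin P) (j : Fin S) =>
      if (i : ℕ) = (j : ℕ) then ((σ j : ℝ) : ℂ) else 0 with hD_def
  -- real diagonal of A Aᴴ + c I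
  set gR : Fin P → ℝ := fun i =>
    (if h : (i : ℕ) < S then (σ ⟨(i : ℕ), h⟩) ^ 2 else 0) + c with hgR_def
  have hgR_pos : ∀ i, 0 < gR i := by
    intro i
    have : (0:ℝ) ≤ (if h : (i : ℕ) < S then (σ ⟨(i : ℕ), h⟩) ^ 2 else 0) := by
      split
      · positivity
      · exact le_refl 0
    simp only [hgR_def]
    linarith
  set g : Fin P → ℂ := fun i => ((gR i : ℝ) : ℂ) with hg_def
  have hg_ne : ∀ i, g i ≠ 0 := by
    intro i
    simp only [hg_def, ne_eq, Complex.ofReal_eq_zero]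
    exact (hgR_pos i).ne'
  -- D * Dᴴ is diagonal
  have hAH : Aᴴ = (V : Matrix (Fin S) (Fin S) ℂ) * Dᴴ * (U : Matrix (Fin P) (Fin P) ℂ)ᴴ := by
    rw [hA]
    simp [Matrix.conjTranspose_mul, Matrix.mul_assoc]
  have hDDH : D * Dᴴ = Matrix.diagonal (fun i : Fin P =>
      if h : (i : ℕ) < S then (((σ ⟨(i : ℕ), h⟩ : ℝ) : ℂ)) ^ 2 else 0) := by
    ext i j
    simp only [Matrix.mul_apply, Matrix.conjTranspose_apply, hD_def, Matrix.of_apply,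
      Matrix.diagonal_apply]
    by_cases hij : i = j
    · subst hij
      by_cases h : (i : ℕ) < S
      · rw [Finset.sum_eq_single (⟨(i : ℕ), h⟩ : Fin S)]
        · simp [h, ← Complex.ofReal_pow, sq]
        · intro k _ hk
          have : ¬ ((i : ℕ) = (k : ℕ)) := by
            intro hcontr
            exact hk (by apply Fin.ext; simp [← hcontr])
          simp [this]
        · intro hk
          exact absurd (Finset.mem_univ _) hk
      · rw [Finset.sum_eq_zero]
        · simp [h]
        · intro k _
          have : ¬ ((i : ℕ) = (k : ℕ)) := fun hcontr => h (hcontr ▸ k.2)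
          simp [this]
    · have hijn : ¬ ((i : ℕ) = (j : ℕ)) := fun hcontr => hij (Fin.ext hcontr)
      rw [Finset.sum_eq_zero]
      · simp [hij]
      · intro k _
        by_cases h1 : (i : ℕ) = (k : ℕ)
        · have h2 : ¬ ((j : ℕ) = (k : ℕ)) := fun hcontr => hijn (by omega)
          simp [h1, h2]
        · simp [h1]
  -- A Aᴴ + c I as a unitary conjugate of a diagonal matrix
  have hgsplit : ∀ i, g i =
      (if h : (i : ℕ) < S then (((σ ⟨(i : ℕ), h⟩ : ℝ) : ℂ)) ^ 2 else 0) + ((c : ℝ) : ℂ) := by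
    intro i
    by_cases h : (i : ℕ) < S <;> simp [hg_def, hgR_def, h, Complex.ofReal_pow]
  have hAAH : A * Aᴴ = (U : Matrix (Fin P) (Fin P) ℂ) * (D * Dᴴ) *
      (U : Matrix (Fin P) (Fin P) ℂ)ᴴ := by
    rw [hAH, hA]
    calc ((U : Matrix (Fin P) (Fin P) ℂ) * D * (V : Matrix (Fin S) (Fin S) ℂ)ᴴ) *
        ((V : Matrix (Fin S) (Fin S) ℂ) * Dᴴ * (U : Matrix (Fin P) (Fin P) ℂ)ᴴ)
        = (U : Matrix (Fin P) (Fin P) ℂ) * (D * (((V : Matrix (Fin S) (Fin S) ℂ)ᴴ *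
            (V : Matrix (Fin S) (Fin S) ℂ)) * (Dᴴ * (U : Matrix (Fin P) (Fin P) ℂ)ᴴ))) := by
          simp only [Matrix.mul_assoc]
      _ = (U : Matrix (Fin P) (Fin P) ℂ) * (D * Dᴴ) * (U : Matrix (Fin P) (Fin P) ℂ)ᴴ := by
          rw [mmse_aux_star_mul V]; simp only [Matrix.one_mul, Matrix.mul_assoc]
  have hM : A * Aᴴ + ((c : ℝ) : ℂ) • (1 : Matrix (Fin P) (Fin P) ℂ) =
      (U : Matrix (Fin P) (Fin P) ℂ) * Matrix.diagonal g * (U : Matrix (Fin P) (Fin P) ℂ)ᴴ := by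
    have hsm : ((c : ℝ) : ℂ) • (1 : Matrix (Fin P) (Fin P) ℂ) =
        (U : Matrix (Fin P) (Fin P) ℂ) * (((c : ℝ) : ℂ) • (1 : Matrix (Fin P) (Fin P) ℂ)) *
          (U : Matrix (Fin P) (Fin P) ℂ)ᴴ := by
      rw [Matrix.mul_smul, Matrix.mul_one, Matrix.smul_mul, mmse_aux_mul_star U]
    rw [hAAH]
    conv_lhs => rw [hsm]
    rw [← Matrix.add_mul, ← Matrix.mul_add]
    congr 1
    congr 1
    rw [hDDH, ← Matrix.diagonal_one, ← Matrix.diagonal_smul, Matrix.diagonal_add]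
    ext i j
    by_cases hij : i = j
    · subst hij
      simp [hgsplit i]
    · simp [Matrix.diagonal_apply_ne _ hij]
  have hMinv : (A * Aᴴ + ((c : ℝ) : ℂ) • (1 : Matrix (Fin P) (Fin P) ℂ))⁻¹ =
      (U : Matrix (Fin P) (Fin P) ℂ) * Matrix.diagonal (fun i => (g i)⁻¹) *
        (U : Matrix (Fin P) (Fin P) ℂ)ᴴ := by
    apply Matrix.inv_eq_right_inv
    rw [hM, mmse_aux_conj_mul U, Matrix.diagonal_mul_diagonal]
    have h1 : (fun i => g i * (g i)⁻¹) = (fun _ => (1 : ℂ)) :=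
      funext fun i => mul_inv_cancel₀ (hg_ne i)
    rw [h1, Matrix.diagonal_one, Matrix.mul_one, mmse_aux_mul_star U]
  -- the sandwich lemma
  have hsand : ∀ f : Fin P → ℂ, Dᴴ * Matrix.diagonal f * D =
      Matrix.diagonal (fun l : Fin S => f (Fin.castLE hPS l) * ((σ l : ℝ) : ℂ) ^ 2) := by
    intro f
    ext l m
    simp only [Matrix.mul_apply, Matrix.mul_diagonal, Matrix.conjTranspose_apply, hD_def,
      Matrix.of_apply, Matrix.diagonal_apply]
    by_cases hlm : l = m
    · subst hlm
      rw [Finset.sum_eq_single (Fin.castLE hPS l)]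
      · simp [sq]; ring
      · intro i _ hi
        have : ¬ ((i : ℕ) = (l : ℕ)) := by
          intro hcontr
          exact hi (by apply Fin.ext; simp [hcontr])
        simp [this]
      · intro hk
        exact absurd (Finset.mem_univ _) hk
    · have hlmn : ¬ ((l : ℕ) = (m : ℕ)) := fun hcontr => hlm (Fin.ext hcontr)
      rw [Finset.sum_eq_zero]
      · simp [hlm]
      · intro i _
        by_cases h1 : (i : ℕ) = (l : ℕ)
        · have h2 : ¬ ((i : ℕ) = (m : ℕ)) := fun hcontr => hlmn (by omega)
          simp [h2]
        · simp [h1]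
  have hAMA : ∀ f : Fin P → ℂ,
      Aᴴ * ((U : Matrix (Fin P) (Fin P) ℂ) * Matrix.diagonal f *
        (U : Matrix (Fin P) (Fin P) ℂ)ᴴ) * A =
      (V : Matrix (Fin S) (Fin S) ℂ) *
        Matrix.diagonal (fun l : Fin S => f (Fin.castLE hPS l) * ((σ l : ℝ) : ℂ) ^ 2) *
        (V : Matrix (Fin S) (Fin S) ℂ)ᴴ := by
    intro f
    rw [hAH, hA]
    calc (V : Matrix (Fin S) (Fin S) ℂ) * Dᴴ * (U : Matrix (Fin P) (Fin P) ℂ)ᴴ *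
        ((U : Matrix (Fin P) (Fin P) ℂ) * Matrix.diagonal f * (U : Matrix (Fin P) (Fin P) ℂ)ᴴ) *
        ((U : Matrix (Fin P) (Fin P) ℂ) * D * (V : Matrix (Fin S) (Fin S) ℂ)ᴴ)
        = (V : Matrix (Fin S) (Fin S) ℂ) * (Dᴴ * (((U : Matrix (Fin P) (Fin P) ℂ)ᴴ *
            (U : Matrix (Fin P) (Fin P) ℂ)) * (Matrix.diagonal f *
            (((U : Matrix (Fin P) (Fin P) ℂ)ᴴ * (U : Matrix (Fin P) (Fin P) ℂ)) *
            (D * (V : Matrix (Fin S) (Fin S) ℂ)ᴴ))))) := by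
          simp only [Matrix.mul_assoc]
      _ = (V : Matrix (Fin S) (Fin S) ℂ) * (Dᴴ * Matrix.diagonal f * D) *
            (V : Matrix (Fin S) (Fin S) ℂ)ᴴ := by
          rw [mmse_aux_star_mul U]; simp only [Matrix.one_mul, Matrix.mul_assoc]
      _ = _ := by rw [hsand f]
  -- the estimator error matrix G
  set w : Fin S → ℂ := fun l => 1 - (g (Fin.castLE hPS l))⁻¹ * ((σ l : ℝ) : ℂ) ^ 2 with hw_def
  have hG : (1 : Matrix (Fin S) (Fin S) ℂ) -
      Aᴴ * (A * Aᴴ + ((c : ℝ) : ℂ) • 1)⁻¹ * A =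
      (V : Matrix (Fin S) (Fin S) ℂ) * Matrix.diagonal w *
        (V : Matrix (Fin S) (Fin S) ℂ)ᴴ := by
    rw [hMinv, Matrix.mul_assoc, ← Matrix.mul_assoc Aᴴ, hAMA (fun i => (g i)⁻¹)]
    have hdw : Matrix.diagonal w = (1 : Matrix (Fin S) (Fin S) ℂ) -
        Matrix.diagonal (fun l : Fin S => (g (Fin.castLE hPS l))⁻¹ * ((σ l : ℝ) : ℂ) ^ 2) := by
      rw [← Matrix.diagonal_one, ← Matrix.diagonal_sub]
    rw [hdw, Matrix.mul_sub, Matrix.sub_mul, Matrix.mul_one, mmse_aux_mul_star V]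
  -- compute the two traces
  have hGH : ((V : Matrix (Fin S) (Fin S) ℂ) * Matrix.diagonal w *
      (V : Matrix (Fin S) (Fin S) ℂ)ᴴ)ᴴ =
      (V : Matrix (Fin S) (Fin S) ℂ) * Matrix.diagonal (fun l => star (w l)) *
        (V : Matrix (Fin S) (Fin S) ℂ)ᴴ := by
    simp only [Matrix.conjTranspose_mul, Matrix.conjTranspose_conjTranspose,
      Matrix.diagonal_conjTranspose, Matrix.mul_assoc]
    rfl
  have htr1 : Matrix.trace
      (((1 : Matrix (Fin S) (Fin S) ℂ) - Aᴴ * (A * Aᴴ + ((c : ℝ) : ℂ) • 1)⁻¹ * A) *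
        ((1 : Matrix (Fin S) (Fin S) ℂ) - Aᴴ * (A * Aᴴ + ((c : ℝ) : ℂ) • 1)⁻¹ * A)ᴴ) =
      ∑ l : Fin S, w l * star (w l) := by
    rw [hG, hGH, mmse_aux_conj_mul V, Matrix.diagonal_mul_diagonal, mmse_aux_trace_conj V,
      Matrix.trace_diagonal]
  have htr2 : Matrix.trace
      (Aᴴ * ((A * Aᴴ + ((c : ℝ) : ℂ) • 1)⁻¹ * (A * Aᴴ + ((c : ℝ) : ℂ) • 1)⁻¹) * A) =
      ∑ l : Fin S, (g (Fin.castLE hPS l))⁻¹ * (g (Fin.castLE hPS l))⁻¹ *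
        ((σ l : ℝ) : ℂ) ^ 2 := by
    rw [hMinv, mmse_aux_conj_mul U, Matrix.diagonal_mul_diagonal,
      hAMA (fun i => (g i)⁻¹ * (g i)⁻¹), mmse_aux_trace_conj V, Matrix.trace_diagonal]
  rw [htr1, htr2, Complex.ofReal_sum, Finset.mul_sum, Finset.mul_sum,
    ← Finset.sum_add_distrib]
  apply Finset.sum_congr rfl
  intro l _
  -- the diagonal value
  have hgl : g (Fin.castLE hPS l) = (((σ l) ^ 2 + c : ℝ) : ℂ) := by
    have hlS : ((Fin.castLE hPS l : Fin P) : ℕ) < S := by simp [l.2]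
    simp only [hg_def, hgR_def, hlS, dif_pos]
    norm_cast
  have hgl_ne : (σ l) ^ 2 + c ≠ 0 := by positivity
  have hwl : w l = ((1 - ((σ l) ^ 2 + c)⁻¹ * (σ l) ^ 2 : ℝ) : ℂ) := by
    rw [hw_def]
    simp only [hgl]
    push_cast
    ring
  have hden : N * (σ l) ^ 2 * ρ + (S : ℝ) ≠ 0 := by positivity
  have hSne : (S : ℝ) ≠ 0 := hSpos.ne'
  have hρNne : ρ * N ≠ 0 := hρN.ne'
  have key : (1 / (S : ℝ)) * ((1 - ((σ l) ^ 2 + c)⁻¹ * (σ l) ^ 2) *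
      (1 - ((σ l) ^ 2 + c)⁻¹ * (σ l) ^ 2)) +
      (1 / (ρ * N)) * (((σ l) ^ 2 + c)⁻¹ * ((σ l) ^ 2 + c)⁻¹ * (σ l) ^ 2) =
      1 / (N * (σ l) ^ 2 * ρ + S) := by
    rw [hc_def] at hgl_ne ⊢
    field_simp
    ring
  rw [hwl, hgl]
  calc (1 / (S : ℂ)) * (((1 - ((σ l) ^ 2 + c)⁻¹ * (σ l) ^ 2 : ℝ) : ℂ) *
        star ((1 - ((σ l) ^ 2 + c)⁻¹ * (σ l) ^ 2 : ℝ) : ℂ)) +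
      (1 / ((ρ : ℂ) * (N : ℂ))) * (((((σ l) ^ 2 + c : ℝ) : ℂ))⁻¹ *
        ((((σ l) ^ 2 + c : ℝ) : ℂ))⁻¹ * ((σ l : ℝ) : ℂ) ^ 2)
      = (((1 / (S : ℝ)) * ((1 - ((σ l) ^ 2 + c)⁻¹ * (σ l) ^ 2) *
          (1 - ((σ l) ^ 2 + c)⁻¹ * (σ l) ^ 2)) +
          (1 / (ρ * N)) * (((σ l) ^ 2 + c)⁻¹ * ((σ l) ^ 2 + c)⁻¹ * (σ l) ^ 2) : ℝ) : ℂ) := by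
        have hstar : ∀ x : ℝ, star ((x : ℝ) : ℂ) = ((x : ℝ) : ℂ) := fun x => by simp
        rw [hstar]
        push_cast
        ring
    _ = ((1 / (N * (σ l) ^ 2 * ρ + S) : ℝ) : ℂ) := by rw [key]
end

section
/- Let P ≥ S ≥ 1 be integers, let ρ > 0 and N > 0 be real numbers, and let A ∈ ℂ^{P×S} have rank S with singular values σ_1,…,σ_S > 0. Set c = S/(ρN) and G = I_S − Aᴴ(AAᴴ + c·I_P)^{-1}A. Then (1/S)·tr(G·Gᴴ) + (1/(ρN))·tr(Aᴴ(AAᴴ + c·I_P)^{-2}A) ≤ ρ^{-1}·Σ_{l=1}^{S} 1/(N·σ_l²). In particular, with C := Σ_{l=1}^{S} σ_l^{-2}/N, this mean-squared-error quantity is at most C/ρ for all ρ > 0. -/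
open Matrix Complex

section Aux

lemma unit_hmul {n : Type*} [Fintype n] [DecidableEq n] (U : Matrix.unitaryGroup n ℂ) :
    (U : Matrix n n ℂ)ᴴ * U = 1 := by
  rw [← Matrix.star_eq_conjTranspose]; exact Unitary.star_mul_self_of_mem U.2

lemma unit_mulh {n : Type*} [Fintype n] [DecidableEq n] (U : Matrix.unitaryGroup n ℂ) :
    (U : Matrix n n ℂ) * (U : Matrix n n ℂ)ᴴ = 1 := by
  rw [← Matrix.star_eq_conjTranspose]; exact Unitary.mul_star_self_of_mem U.2

lemma conj_diag_mul {n : Type*} [Fintype n] [DecidableEq n] (U : Matrix.unitaryGroup n ℂ)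
    (f g : n → ℂ) :
    ((U : Matrix n n ℂ) * Matrix.diagonal f * (U : Matrix n n ℂ)ᴴ) *
      ((U : Matrix n n ℂ) * Matrix.diagonal g * (U : Matrix n n ℂ)ᴴ) =
    (U : Matrix n n ℂ) * Matrix.diagonal (fun i => f i * g i) * (U : Matrix n n ℂ)ᴴ := by
  have h1 : (U : Matrix n n ℂ)ᴴ * ((U : Matrix n n ℂ) * Matrix.diagonal g * (U : Matrix n n ℂ)ᴴ)
      = Matrix.diagonal g * (U : Matrix n n ℂ)ᴴ := by
    rw [Matrix.mul_assoc ((U:Matrix n n ℂ)) (Matrix.diagonal g), ← Matrix.mul_assoc,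
      unit_hmul, Matrix.one_mul]
  rw [Matrix.mul_assoc, h1, ← Matrix.mul_assoc, Matrix.mul_assoc (U : Matrix n n ℂ),
    Matrix.diagonal_mul_diagonal, Matrix.mul_assoc]

lemma traceConjU {n : Type*} [Fintype n] [DecidableEq n] (U : Matrix.unitaryGroup n ℂ)
    (X : Matrix n n ℂ) :
    Matrix.trace ((U : Matrix n n ℂ) * X * (U : Matrix n n ℂ)ᴴ) = Matrix.trace X := by
  rw [Matrix.trace_mul_cycle, unit_hmul, Matrix.one_mul]

noncomputable def Dmat (P S : ℕ) (σ : Fin S → ℝ) : Matrix (Fin P) (Fin S) ℂ :=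
  Matrix.of fun (i : Fin P) (j : Fin S) => if (i : ℕ) = (j : ℕ) then ((σ j : ℝ) : ℂ) else 0

lemma ddh {P S : ℕ} (σ : Fin S → ℝ) : Dmat P S σ * (Dmat P S σ)ᴴ =
    Matrix.diagonal (fun i : Fin P =>
      (((if h : (i : ℕ) < S then (σ ⟨i, h⟩)^2 else 0 : ℝ)) : ℂ)) := by
  ext i j
  simp only [mul_apply, conjTranspose_apply, Dmat, of_apply, diagonal_apply, apply_ite star,
    star_zero, RCLike.star_def, conj_ofReal]
  by_cases hij : i = j
  · subst hij
    simp only [if_pos rfl]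
    by_cases h : (i : ℕ) < S
    · rw [Finset.sum_eq_single ⟨(i : ℕ), h⟩]
      · simp [dif_pos h, ← ofReal_mul, sq]
      · intro k _ hk
        have : ¬ ((i : ℕ) = (k : ℕ)) := fun hc => hk (by ext; simp [← hc])
        simp [this]
      · simp
    · rw [Finset.sum_eq_zero, dif_neg h]
      · simp
      intro k _
      have : ¬ ((i : ℕ) = (k : ℕ)) := fun hc => h (hc ▸ k.isLt)
      simp [this]
  · rw [Finset.sum_eq_zero, if_neg hij]
    intro k _
    by_cases h1 : (i : ℕ) = (k : ℕ)
    · have : ¬ ((j : ℕ) = (k : ℕ)) := fun hc => hij (by ext; omega)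
      simp [this]
    · simp [h1]

lemma dhfd {P S : ℕ} (hPS : S ≤ P) (σ : Fin S → ℝ) (f : Fin P → ℂ) :
    (Dmat P S σ)ᴴ * (Matrix.diagonal f * Dmat P S σ) =
    Matrix.diagonal (fun l : Fin S => (((σ l)^2 : ℝ) : ℂ) * f (Fin.castLE hPS l)) := by
  ext k l
  simp only [mul_apply, conjTranspose_apply, Dmat, of_apply, diagonal_apply, apply_ite star,
    star_zero, RCLike.star_def, conj_ofReal, ite_mul, zero_mul, Finset.sum_ite_eq,
    Finset.mem_univ, if_true]
  by_cases hkl : k = l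
  · subst hkl
    rw [if_pos rfl, Finset.sum_eq_single (Fin.castLE hPS k)]
    · have h1 : ((Fin.castLE hPS k : Fin P) : ℕ) = (k : ℕ) := rfl
      simp [h1, sq]; ring
    · intro j _ hj
      have : ¬ ((j : ℕ) = (k : ℕ)) := fun hc => hj (by ext; simpa using hc)
      simp [this]
    · simp
  · rw [if_neg hkl, Finset.sum_eq_zero]
    intro j _
    by_cases h1 : (j : ℕ) = (k : ℕ)
    · have : ¬ ((j : ℕ) = (l : ℕ)) := fun hc => hkl (by ext; omega)
      simp [this]
    · simp [h1]

end Aux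

/-- Upper bound for the conditional MSE of the pilot-aided MMSE channel estimate under
the correct support hypothesis.  Here `A ∈ ℂ^{P×S}` has rank `S`, with singular value
decomposition `A = U Σ Vᴴ` where the singular values `σ l` are all positive,
`c = S/(ρN)`, and `G = I − Aᴴ(AAᴴ + c I)⁻¹ A`.  Then the (real) quantity
`(1/S)·tr(G Gᴴ) + (1/(ρN))·tr(Aᴴ (AAᴴ + c I)⁻² A)` is at most
`ρ⁻¹ ∑_l 1/(N σ_l²) = C/ρ` with `C = ∑_l σ_l⁻²/N`. -/
theorem mmse_correct_support_bound (P S : ℕ) (hS : 1 ≤ S) (hPS : S ≤ P)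
    (ρ N : ℝ) (hρ : 0 < ρ) (hN : 0 < N)
    (A : Matrix (Fin P) (Fin S) ℂ) (hrank : A.rank = S)
    (σ : Fin S → ℝ) (hσ : ∀ l, 0 < σ l)
    (U : Matrix.unitaryGroup (Fin P) ℂ) (V : Matrix.unitaryGroup (Fin S) ℂ)
    (hA : A = (U : Matrix (Fin P) (Fin P) ℂ) *
        (Matrix.of fun (i : Fin P) (j : Fin S) =>
          if (i : ℕ) = (j : ℕ) then ((σ j : ℝ) : ℂ) else 0) *
        (V : Matrix (Fin S) (Fin S) ℂ)ᴴ) :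
    ((1 / (S : ℂ)) *
          Matrix.trace
            (((1 : Matrix (Fin S) (Fin S) ℂ) -
                Aᴴ * (A * Aᴴ + (((S : ℝ) / (ρ * N) : ℝ) : ℂ) • 1)⁻¹ * A) *
              ((1 : Matrix (Fin S) (Fin S) ℂ) -
                Aᴴ * (A * Aᴴ + (((S : ℝ) / (ρ * N) : ℝ) : ℂ) • 1)⁻¹ * A)ᴴ) +
        (1 / ((ρ : ℂ) * (N : ℂ))) *
          Matrix.trace
            (Aᴴ * ((A * Aᴴ + (((S : ℝ) / (ρ * N) : ℝ) : ℂ) • 1)⁻¹ *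
                (A * Aᴴ + (((S : ℝ) / (ρ * N) : ℝ) : ℂ) • 1)⁻¹) * A)).im = 0 ∧
    ((1 / (S : ℂ)) *
          Matrix.trace
            (((1 : Matrix (Fin S) (Fin S) ℂ) -
                Aᴴ * (A * Aᴴ + (((S : ℝ) / (ρ * N) : ℝ) : ℂ) • 1)⁻¹ * A) *
              ((1 : Matrix (Fin S) (Fin S) ℂ) -
                Aᴴ * (A * Aᴴ + (((S : ℝ) / (ρ * N) : ℝ) : ℂ) • 1)⁻¹ * A)ᴴ) +
        (1 / ((ρ : ℂ) * (N : ℂ))) *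
          Matrix.trace
            (Aᴴ * ((A * Aᴴ + (((S : ℝ) / (ρ * N) : ℝ) : ℂ) • 1)⁻¹ *
                (A * Aᴴ + (((S : ℝ) / (ρ * N) : ℝ) : ℂ) • 1)⁻¹) * A)).re ≤
      ρ⁻¹ * ∑ l : Fin S, 1 / (N * (σ l) ^ 2) := by
  have hrn : (0:ℝ) < ρ * N := mul_pos hρ hN
  set cR : ℝ := (S : ℝ) / (ρ * N) with hcR_def
  have hcR : 0 < cR := div_pos (by exact_mod_cast Nat.lt_of_lt_of_le Nat.zero_lt_one hS) hrn
  set Um : Matrix (Fin P) (Fin P) ℂ := (U : Matrix (Fin P) (Fin P) ℂ) with hUm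
  set Vm : Matrix (Fin S) (Fin S) ℂ := (V : Matrix (Fin S) (Fin S) ℂ) with hVm
  -- real diagonal data
  set dR : Fin P → ℝ := fun i => if h : (i : ℕ) < S then (σ ⟨i, h⟩)^2 else 0 with hdR
  set mR : Fin P → ℝ := fun i => dR i + cR with hmR
  have hdR_nonneg : ∀ i, 0 ≤ dR i := by
    intro i; simp only [hdR]; split <;> positivity
  have hmR_pos : ∀ i, 0 < mR i := fun i => add_pos_of_nonneg_of_pos (hdR_nonneg i) hcR
  have hmR_ne : ∀ i, ((mR i : ℝ) : ℂ) ≠ 0 := fun i =>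
    ofReal_ne_zero.mpr (ne_of_gt (hmR_pos i))
  have hD : A = Um * Dmat P S σ * Vmᴴ := hA
  have hAH : Aᴴ = Vm * (Dmat P S σ)ᴴ * Umᴴ := by
    rw [hD, conjTranspose_mul, conjTranspose_mul, conjTranspose_conjTranspose, Matrix.mul_assoc]
  -- A Aᴴ
  have hAAH : A * Aᴴ = Um * Matrix.diagonal (fun i => ((dR i : ℝ) : ℂ)) * Umᴴ := by
    rw [hAH, hD]
    have : Vmᴴ * (Vm * (Dmat P S σ)ᴴ * Umᴴ) = (Dmat P S σ)ᴴ * Umᴴ := by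
      rw [← Matrix.mul_assoc, ← Matrix.mul_assoc, unit_hmul, Matrix.one_mul]
    rw [Matrix.mul_assoc (Um * Dmat P S σ), this, ← Matrix.mul_assoc,
      Matrix.mul_assoc Um, ddh σ, Matrix.mul_assoc]
  set M : Matrix (Fin P) (Fin P) ℂ := A * Aᴴ + ((cR : ℝ) : ℂ) • 1 with hM_def
  have hM : M = Um * Matrix.diagonal (fun i => ((mR i : ℝ) : ℂ)) * Umᴴ := by
    have h1 : (((cR : ℝ) : ℂ)) • (1 : Matrix (Fin P) (Fin P) ℂ) =
        Um * Matrix.diagonal (fun _ : Fin P => ((cR : ℝ) : ℂ)) * Umᴴ := by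
      rw [← Matrix.smul_one_eq_diagonal, Matrix.mul_smul, Matrix.mul_one, Matrix.smul_mul,
        unit_mulh]
    rw [hM_def, hAAH, h1, ← Matrix.add_mul, ← Matrix.mul_add, Matrix.diagonal_add]
    push_cast [hmR]
    ring_nf
    simp only [add_comm]
  have hMinv : M⁻¹ = Um * Matrix.diagonal (fun i => ((mR i : ℝ) : ℂ)⁻¹) * Umᴴ := by
    apply Matrix.inv_eq_left_inv
    rw [hM, conj_diag_mul]
    have : (fun i : Fin P => ((mR i : ℝ) : ℂ)⁻¹ * ((mR i : ℝ) : ℂ)) = fun _ => 1 :=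
      funext fun i => inv_mul_cancel₀ (hmR_ne i)
    rw [this, Matrix.diagonal_one, Matrix.mul_one, unit_mulh]
  have hcancelU : ∀ X : Matrix (Fin P) (Fin S) ℂ, Umᴴ * (Um * X) = X := by
    intro X; rw [← Matrix.mul_assoc, unit_hmul, Matrix.one_mul]
  have key : ∀ f : Fin P → ℂ, Aᴴ * (Um * Matrix.diagonal f * Umᴴ) * A =
      Vm * Matrix.diagonal (fun l : Fin S => (((σ l)^2 : ℝ) : ℂ) * f (Fin.castLE hPS l)) * Vmᴴ := by
    intro f
    rw [hAH]
    conv_lhs => rw [hD]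
    simp only [Matrix.mul_assoc]
    rw [hcancelU, hcancelU (Dmat P S σ * Vmᴴ)]
    congr 1
    rw [← Matrix.mul_assoc (Matrix.diagonal f), ← Matrix.mul_assoc, dhfd hPS σ f]
  have hmcast : ∀ l : Fin S, mR (Fin.castLE hPS l) = (σ l)^2 + cR := by
    intro l
    simp only [hmR, hdR]
    rw [dif_pos (show ((Fin.castLE hPS l : Fin P) : ℕ) < S from l.isLt)]
    congr 2
  set gR : Fin S → ℝ := fun l => (σ l)^2 / ((σ l)^2 + cR) with hgR
  have hxc_pos : ∀ l : Fin S, 0 < (σ l)^2 + cR := fun l => add_pos (pow_pos (hσ l) 2) hcR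
  have hT1mat : Aᴴ * M⁻¹ * A = Vm * Matrix.diagonal (fun l => ((gR l : ℝ) : ℂ)) * Vmᴴ := by
    rw [hMinv, key]
    have hfun : (fun l : Fin S => (((σ l)^2 : ℝ) : ℂ) * ((mR (Fin.castLE hPS l) : ℝ) : ℂ)⁻¹) =
        fun l : Fin S => ((gR l : ℝ) : ℂ) := by
      funext l
      rw [hmcast l]
      simp only [hgR, div_eq_mul_inv]
      norm_cast
    rw [hfun]
  have hGdiag : (1 : Matrix (Fin S) (Fin S) ℂ) - Aᴴ * M⁻¹ * A =
      Vm * Matrix.diagonal (fun l => ((1 - gR l : ℝ) : ℂ)) * Vmᴴ := by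
    have h1 : (1 : Matrix (Fin S) (Fin S) ℂ) =
        Vm * Matrix.diagonal (fun _ : Fin S => (1 : ℂ)) * Vmᴴ := by
      rw [Matrix.diagonal_one, Matrix.mul_one, unit_mulh]
    have h2 : (fun l : Fin S => (fun _ : Fin S => (1:ℂ)) l - (fun l : Fin S => ((gR l : ℝ) : ℂ)) l) =
        fun l : Fin S => ((1 - gR l : ℝ) : ℂ) := by
      funext l
      rw [ofReal_sub, ofReal_one]
    rw [hT1mat]
    conv_lhs => rw [h1]
    rw [← Matrix.sub_mul, ← Matrix.mul_sub, Matrix.diagonal_sub, h2]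
  have hGH : ((1 : Matrix (Fin S) (Fin S) ℂ) - Aᴴ * M⁻¹ * A)ᴴ =
      Vm * Matrix.diagonal (fun l => ((1 - gR l : ℝ) : ℂ)) * Vmᴴ := by
    have hstar : star (fun l : Fin S => ((1 - gR l : ℝ) : ℂ)) =
        fun l : Fin S => ((1 - gR l : ℝ) : ℂ) := by
      funext l
      simp [conj_ofReal]
    rw [hGdiag, conjTranspose_mul, conjTranspose_mul, conjTranspose_conjTranspose,
      Matrix.diagonal_conjTranspose, hstar, ← Matrix.mul_assoc]
  have htr1 : Matrix.trace (((1 : Matrix (Fin S) (Fin S) ℂ) - Aᴴ * M⁻¹ * A) *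
      ((1 : Matrix (Fin S) (Fin S) ℂ) - Aᴴ * M⁻¹ * A)ᴴ) =
      ∑ l : Fin S, (((1 - gR l)^2 : ℝ) : ℂ) := by
    rw [hGH, hGdiag, conj_diag_mul, traceConjU, Matrix.trace_diagonal]
    refine Finset.sum_congr rfl fun l _ => ?_
    norm_cast
    ring
  have htr2 : Matrix.trace (Aᴴ * (M⁻¹ * M⁻¹) * A) =
      ∑ l : Fin S, (((σ l)^2 / ((σ l)^2 + cR)^2 : ℝ) : ℂ) := by
    have hMM : M⁻¹ * M⁻¹ = Um * Matrix.diagonal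
        (fun i => ((mR i : ℝ) : ℂ)⁻¹ * ((mR i : ℝ) : ℂ)⁻¹) * Umᴴ := by
      rw [hMinv, conj_diag_mul]
    rw [hMM, key, traceConjU, Matrix.trace_diagonal]
    refine Finset.sum_congr rfl fun l _ => ?_
    rw [hmcast l]
    norm_cast
    field_simp
  -- the real value
  set R : ℝ := (1 / (S : ℝ)) * ∑ l : Fin S, (1 - gR l)^2 +
      (1 / (ρ * N)) * ∑ l : Fin S, (σ l)^2 / ((σ l)^2 + cR)^2 with hR
  have hEq : (1 / (S : ℂ)) *
        Matrix.trace (((1 : Matrix (Fin S) (Fin S) ℂ) - Aᴴ * M⁻¹ * A) *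
          ((1 : Matrix (Fin S) (Fin S) ℂ) - Aᴴ * M⁻¹ * A)ᴴ) +
      (1 / ((ρ : ℂ) * (N : ℂ))) * Matrix.trace (Aᴴ * (M⁻¹ * M⁻¹) * A) = ((R : ℝ) : ℂ) := by
    rw [htr1, htr2, hR]
    push_cast
    ring
  rw [hEq]
  refine ⟨ofReal_im R, ?_⟩
  rw [ofReal_re, hR]
  have hrw : ∀ l : Fin S, 1 - gR l = cR / ((σ l)^2 + cR) := by
    intro l
    rw [hgR]
    field_simp
    ring
  calc (1 / (S : ℝ)) * ∑ l : Fin S, (1 - gR l)^2 +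
      (1 / (ρ * N)) * ∑ l : Fin S, (σ l)^2 / ((σ l)^2 + cR)^2
      = ∑ l : Fin S, ((1 / (S : ℝ)) * (cR / ((σ l)^2 + cR))^2 +
          (1 / (ρ * N)) * ((σ l)^2 / ((σ l)^2 + cR)^2)) := by
        rw [Finset.mul_sum, Finset.mul_sum, ← Finset.sum_add_distrib]
        refine Finset.sum_congr rfl fun l _ => ?_
        rw [hrw l]
    _ ≤ ∑ l : Fin S, ρ⁻¹ * (1 / (N * (σ l)^2)) := by
        apply Finset.sum_le_sum
        intro l _
        have hx : 0 < (σ l)^2 := pow_pos (hσ l) 2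
        have hxc := hxc_pos l
        have hSpos : (0:ℝ) < (S:ℝ) := by exact_mod_cast Nat.lt_of_lt_of_le Nat.zero_lt_one hS
        have hSval : (S : ℝ) = cR * (ρ * N) := by
          rw [hcR_def]; field_simp
        have heq : (1 / (S : ℝ)) * (cR / ((σ l)^2 + cR))^2 +
            (1 / (ρ * N)) * ((σ l)^2 / ((σ l)^2 + cR)^2) = 1 / ((ρ * N) * ((σ l)^2 + cR)) := by
          rw [hSval]
          field_simp
          ring
        rw [heq]
        have h2 : ρ⁻¹ * (1 / (N * (σ l)^2)) = 1 / ((ρ * N) * (σ l)^2) := by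
          field_simp
        rw [h2]
        apply one_div_le_one_div_of_le (mul_pos hrn hx)
        have : (σ l)^2 ≤ (σ l)^2 + cR := le_add_of_nonneg_right hcR.le
        exact mul_le_mul_of_nonneg_left this hrn.le
    _ = ρ⁻¹ * ∑ l : Fin S, 1 / (N * (σ l)^2) := by rw [Finset.mul_sum]
end

section
/- Let N be a prime number, let F be the N-point unitary DFT matrix, let R ⊆ {0,…,N−1} with |R| = P, and let S be an integer with 1 ≤ S ≤ P − 1 (i.e., P ≥ S+1). If C₁ and C₂ are distinct S-element subsets of {0,…,N−1}, then the column space of F(R,C₂) is not contained in the column space of F(R,C₁). In particular, the column spaces of F(R,C₁) and F(R,C₂) are distinct S-dimensional subspaces of ℂ^P, and the orthogonal projection of ℂ^P onto the orthogonal complement of the column space of F(R,C₁) maps F(R,C₂) to a nonzero matrix. -/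
set_option maxHeartbeats 1600000

open Matrix Complex

section Chebotarev

open Polynomial


lemma deriv_pow_dvd {R : Type*} [CommRing R] {a : R} {k : ℕ} {Q : R[X]}
    (h : (X - C a) ^ (k+1) ∣ Q) : (X - C a) ^ k ∣ derivative Q := by
  obtain ⟨g, rfl⟩ := h
  rw [derivative_mul, derivative_pow, derivative_X_sub_C]
  have h1 : (X - C a) ^ k ∣ (X - C a) ^ (k + 1 - 1) := by norm_num
  exact dvd_add (((h1.mul_left _).mul_right _).mul_right g)
    ((pow_dvd_pow _ k.le_succ).mul_right _)

lemma X_mul_deriv_X_pow {R : Type*} [CommRing R] (k : ℕ) :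
    X * derivative (X ^ k : R[X]) = (k : R[X]) * X ^ k := by
  cases k with
  | zero => simp
  | succ m => rw [derivative_X_pow]; push_cast; ring_nf; simp [pow_succ]; ring

-- Tao's lemma: a poly with n terms of degree < p over 𝔽_p cannot vanish to order n at 1
lemma tao_lemma {p : ℕ} [Fact p.Prime] :
    ∀ (n : ℕ) (b : Fin n → ℕ), Function.Injective b → (∀ j, b j < p) →
    ∀ c : Fin n → ZMod p,
      ((X - 1) ^ n ∣ ∑ j, C (c j) * X ^ (b j)) → ∀ j, c j = 0 := by
  intro n
  induction n with
  | zero => intro b _ _ c _ j; exact absurd j.2 (by simp)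
  | succ n IH =>
    intro b hbinj hbp c hdvd
    set Q : (ZMod p)[X] := ∑ j, C (c j) * X ^ (b j) with hQ
    set B : ZMod p := (b (Fin.last n) : ZMod p) with hB
    -- the "twisted derivative"
    have key : X * derivative Q - C B * Q
        = ∑ j : Fin n, C (c j.castSucc * ((b j.castSucc : ZMod p) - B))
            * X ^ (b j.castSucc) := by
      rw [hQ, derivative_sum, Finset.mul_sum, Finset.mul_sum, ← Finset.sum_sub_distrib]
      rw [Fin.sum_univ_castSucc]
      have hlast : X * derivative (C (c (Fin.last n)) * X ^ b (Fin.last n))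
          - C B * (C (c (Fin.last n)) * X ^ b (Fin.last n)) = 0 := by
        rw [derivative_C_mul, ← mul_assoc, mul_comm X (C (c (Fin.last n))), mul_assoc,
          X_mul_deriv_X_pow, hB]
        simp only [C_sub, C_mul, ← C_eq_natCast]
        ring
      rw [hlast, add_zero]
      refine Finset.sum_congr rfl fun j _ => ?_
      rw [derivative_C_mul, ← mul_assoc, mul_comm X (C (c j.castSucc)), mul_assoc,
        X_mul_deriv_X_pow]
      simp only [C_sub, C_mul, ← C_eq_natCast]
      ring
    have hdvd' : (X - 1) ^ n ∣ X * derivative Q - C B * Q := by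
      have h1 : (X - (1:(ZMod p)[X])) = X - C 1 := by rw [C_1]
      refine dvd_sub ?_ ?_
      · exact (by rw [h1]; exact deriv_pow_dvd (by rwa [← h1]) : (X-1)^n ∣ derivative Q).mul_left X
      · exact ((pow_dvd_pow _ n.le_succ).trans hdvd).mul_left _
    rw [key] at hdvd'
    have hzero := IH (fun j => b j.castSucc)
      (fun i j h => Fin.castSucc_injective n (hbinj h))
      (fun j => hbp _) _ hdvd'
    have hcast : ∀ j : Fin n, c j.castSucc = 0 := by
      intro j
      have h2 := hzero j
      have hne : ((b j.castSucc : ZMod p) - B) ≠ 0 := by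
        rw [hB, sub_ne_zero]
        intro h
        have := hbinj (a₁ := j.castSucc) (a₂ := Fin.last n) ?_
        · exact absurd this (by simp [Fin.ext_iff, Fin.castSucc, j.2.ne])
        · have v1 := ZMod.val_cast_of_lt (hbp j.castSucc)
          have v2 := ZMod.val_cast_of_lt (hbp (Fin.last n))
          rw [← v1, ← v2, h]
      exact (mul_eq_zero.mp h2).resolve_right hne
    -- now Q = C (c last) * X ^ (b last), which has root 1
    intro j
    refine Fin.lastCases ?_ ?_ j
    · -- last case: evaluate at 1
      have hQeq : Q = C (c (Fin.last n)) * X ^ (b (Fin.last n)) := by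
        rw [hQ, Fin.sum_univ_castSucc]
        simp [hcast]
      have hroot : Q.eval 1 = 0 := by
        have : (X - C 1) ∣ Q := by
          refine dvd_trans (dvd_pow_self _ (Nat.succ_ne_zero n)) ?_
          rw [C_1]
          exact hdvd
        exact (dvd_iff_isRoot.mp this)
      rw [hQeq] at hroot
      simpa using hroot
    · exact hcast


lemma chebotarev {N : ℕ} (hN : N.Prime) {η : ℂ} (hη : IsPrimitiveRoot η N)
    {n : ℕ} (a b : Fin n → Fin N) (ha : Function.Injective a) (hb : Function.Injective b) :
    (Matrix.of fun i j : Fin n => η ^ ((a i : ℕ) * (b j : ℕ))).det ≠ 0 := by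
  haveI : Fact N.Prime := ⟨hN⟩
  classical
  set Φ : ℤ[X] := cyclotomic N ℤ with hΦ
  set I : Ideal ℤ[X] := Ideal.span {Φ} with hI
  haveI hIp : I.IsPrime := (Ideal.span_singleton_prime (cyclotomic_ne_zero N ℤ)).mpr
    ((UniqueFactorizationMonoid.irreducible_iff_prime).mp (cyclotomic.irreducible hN.pos))
  haveI : IsDomain (ℤ[X] ⧸ I) := Ideal.Quotient.isDomain I
  set R := ℤ[X] ⧸ I with hR
  let mk : ℤ[X] →+* R := Ideal.Quotient.mk I
  -- the map to ℂ
  have hΦη : (aeval η).toRingHom Φ = 0 := by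
    have := (hη.isRoot_cyclotomic hN.pos (R := ℂ))
    simpa [hΦ, aeval_def, eval₂_eq_eval_map, map_cyclotomic] using this
  let ι : R →+* ℂ := Ideal.Quotient.lift I (aeval η).toRingHom (by
    intro f hf
    rw [hI, Ideal.mem_span_singleton] at hf
    obtain ⟨g, rfl⟩ := hf
    rw [_root_.map_mul, hΦη, zero_mul])
  have hιmk : ∀ f : ℤ[X], ι (mk f) = aeval η f := fun f => rfl
  have hιinj : Function.Injective ι := by
    rw [injective_iff_map_eq_zero]
    intro y hy
    obtain ⟨f, rfl⟩ := Ideal.Quotient.mk_surjective (I := I) y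
    have hf : aeval η f = 0 := hy
    have hdvd : Φ ∣ f := by
      have h1 : (minpoly ℚ η) ∣ (f.map (Int.castRingHom ℚ)) := by
        apply minpoly.dvd
        rw [show ((Int.castRingHom ℚ) : ℤ →+* ℚ) = algebraMap ℤ ℚ from rfl,
          aeval_map_algebraMap]
        exact hf
      rw [← cyclotomic_eq_minpoly_rat hη hN.pos, ← map_cyclotomic N (Int.castRingHom ℚ)] at h1
      exact (map_dvd_map (Int.castRingHom ℚ) (fun x y h => Int.cast_injective h)
        (cyclotomic.monic N ℤ)).mp h1
    exact Ideal.Quotient.eq_zero_iff_mem.mpr (Ideal.mem_span_singleton.mpr hdvd)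
  set x : R := mk X with hx
  have hιx : ι x = η := by rw [hx, hιmk, aeval_X]
  -- the map to ZMod N
  have hΦ1 : ((Int.castRingHom (ZMod N)).comp (evalRingHom 1)) Φ = 0 := by
    simp [hΦ, eval_one_cyclotomic_prime]
  let φ : R →+* ZMod N := Ideal.Quotient.lift I
    ((Int.castRingHom (ZMod N)).comp (evalRingHom 1)) (by
      intro f hf
      rw [hI, Ideal.mem_span_singleton] at hf
      obtain ⟨g, rfl⟩ := hf
      rw [_root_.map_mul, hΦ1, zero_mul])
  have hφmk : ∀ f : ℤ[X], φ (mk f) = ((f.eval 1 : ℤ) : ZMod N) := fun f => rfl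
  have hφx : φ x = 1 := by rw [hx, hφmk, eval_X, Int.cast_one]
  -- kernel of φ is generated by x - 1
  have hker : ∀ y : R, φ y = 0 → (x - 1) ∣ y := by
    intro y hy
    obtain ⟨f, rfl⟩ := Ideal.Quotient.mk_surjective (I := I) y
    rw [hφmk] at hy
    obtain ⟨m, hm⟩ := (ZMod.intCast_zmod_eq_zero_iff_dvd _ N).mp hy
    have h1 : (X - C 1 : ℤ[X]) ∣ f - C (f.eval 1) := X_sub_C_dvd_sub_C_eval
    have h2 : (X - C 1 : ℤ[X]) ∣ Φ - C (Φ.eval 1) := X_sub_C_dvd_sub_C_eval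
    have hΦeval : Φ.eval 1 = N := by simpa [hΦ] using eval_one_cyclotomic_prime (R := ℤ) (p := N)
    have hmkC : (x - 1) ∣ mk (C (N : ℤ)) := by
      have h4 := map_dvd mk h2
      rw [hΦeval, map_sub, map_sub, show mk Φ = 0 from Ideal.Quotient.eq_zero_iff_mem.mpr
        (Ideal.subset_span (Set.mem_singleton _)), zero_sub, C_1, _root_.map_one] at h4
      exact dvd_neg.mp h4
    have h3 : (x - 1) ∣ mk (f - C (f.eval 1)) := by
      have h4 := map_dvd mk h1
      rwa [map_sub, C_1, _root_.map_one] at h4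
    have : mk f = mk (f - C (f.eval 1)) + mk (C (N : ℤ)) * mk (C m) := by
      rw [← _root_.map_mul, ← _root_.map_add, ← C_mul, ← hm, sub_add_cancel]
    rw [this]
    exact dvd_add h3 (hmkC.mul_right _)
  -- x - 1 is a nonzero nonunit
  have hπ0 : x - 1 ≠ 0 := by
    intro h
    have : ι (x - 1) = 0 := by rw [h, map_zero]
    rw [map_sub, hιx, _root_.map_one, sub_eq_zero] at this
    exact hη.ne_one hN.one_lt this
  haveI : Fact (1 < N) := ⟨hN.one_lt⟩
  have hπu : ¬IsUnit (x - 1) := by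
    intro h
    have := h.map φ
    rw [map_sub, hφx, _root_.map_one, sub_self] at this
    exact not_isUnit_zero this
  -- suppose the complex determinant vanishes
  intro hdet
  set MR : Matrix (Fin n) (Fin n) R := Matrix.of fun i j => x ^ ((a i : ℕ) * (b j : ℕ)) with hMR
  have hMmap : MR.map ι = Matrix.of fun i j : Fin n => η ^ ((a i : ℕ) * (b j : ℕ)) := by
    ext i j
    simp [hMR, map_pow, hιx]
  have hdetR : MR.det = 0 := by
    apply hιinj
    rw [map_zero, RingHom.map_det, RingHom.mapMatrix_apply, hMmap, hdet]
  obtain ⟨v, hv0, hv⟩ := (Matrix.exists_mulVec_eq_zero_iff).mpr hdetR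
  haveI : IsNoetherianRing R := by infer_instance
  haveI : WfDvdMonoid R := IsNoetherianRing.wfDvdMonoid
  obtain ⟨j₀, hj₀⟩ := Function.ne_iff.mp hv0
  simp only [Pi.zero_apply] at hj₀
  -- normalize so that some coefficient is not killed by φ
  have main : ∀ y : R, ∀ w : Fin n → R, w j₀ = y → w j₀ ≠ 0 → MR.mulVec w = 0 →
      ∃ d : Fin n → R, MR.mulVec d = 0 ∧ ∃ j, φ (d j) ≠ 0 := by
    intro y
    refine (wellFounded_dvdNotUnit).induction
      (C := fun y => ∀ w : Fin n → R, w j₀ = y → w j₀ ≠ 0 → MR.mulVec w = 0 →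
        ∃ d : Fin n → R, MR.mulVec d = 0 ∧ ∃ j, φ (d j) ≠ 0) y ?_
    rintro y IH w rfl hne hrel
    by_cases hφall : ∀ j, φ (w j) = 0
    · choose d hd using fun j => hker (w j) (hφall j)
      have hrel' : MR.mulVec d = 0 := by
        funext i
        have h6 := congrFun hrel i
        simp only [Matrix.mulVec, dotProduct, Pi.zero_apply] at h6 ⊢
        have h7 : ∑ j, MR i j * w j = (x - 1) * ∑ j, MR i j * d j := by
          rw [Finset.mul_sum]
          exact Finset.sum_congr rfl fun j _ => by rw [hd j]; ring
        rw [h7] at h6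
        exact (mul_eq_zero.mp h6).resolve_left hπ0
      have hd0 : d j₀ ≠ 0 := by
        intro h
        apply hne
        rw [hd j₀, h, mul_zero]
      exact IH (d j₀) ⟨hd0, x - 1, hπu, by rw [hd j₀]; ring⟩ d rfl hd0 hrel'
    · push_neg at hφall
      exact ⟨w, hrel, hφall⟩
  obtain ⟨d, hdrel, j₁, hj₁⟩ := main (v j₀) v rfl hj₀ hv
  -- build the polynomial with exponents b and coefficients d
  set Q : R[X] := ∑ j, Polynomial.C (d j) * Polynomial.X ^ (b j : ℕ) with hQdef
  have hcoeff : ∀ j : Fin n, Q.coeff (b j : ℕ) = d j := by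
    intro j
    rw [hQdef, finset_sum_coeff, Finset.sum_eq_single j]
    · simp [coeff_C_mul, coeff_X_pow]
    · intro k _ hk
      have hne2 : ¬((b j : ℕ) = (b k : ℕ)) := fun h => hk (hb (Fin.val_injective h)).symm
      simp [coeff_C_mul, coeff_X_pow, hne2]
    · intro h
      exact absurd (Finset.mem_univ j) h
  have hQ0 : Q ≠ 0 := by
    intro h
    apply hj₁
    rw [← hcoeff j₁, h, Polynomial.coeff_zero, map_zero]
  have hroot : ∀ i : Fin n, Q.IsRoot (x ^ (a i : ℕ)) := by
    intro i
    have h7 := congrFun hdrel i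
    simp only [Matrix.mulVec, dotProduct, Pi.zero_apply, hMR, Matrix.of_apply] at h7
    rw [Polynomial.IsRoot, hQdef, Polynomial.eval_finset_sum]
    simp only [Polynomial.eval_mul, Polynomial.eval_C, Polynomial.eval_pow, Polynomial.eval_X,
      ← pow_mul]
    rw [← h7]
    exact Finset.sum_congr rfl fun j _ => mul_comm _ _
  have hxinj : Function.Injective (fun i : Fin n => x ^ (a i : ℕ)) := by
    intro i i' h
    simp only [] at h
    have h8 : η ^ (a i : ℕ) = η ^ (a i' : ℕ) := by
      have h9 := congrArg ι h
      rwa [map_pow, map_pow, hιx] at h9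
    exact ha (Fin.val_injective (hη.pow_inj (a i).2 (a i').2 h8))
  set s : Multiset R := Finset.univ.val.map (fun i : Fin n => x ^ (a i : ℕ)) with hs
  have hsnodup : s.Nodup := Multiset.Nodup.map hxinj Finset.univ.nodup
  have hsle : s ≤ Q.roots := by
    rw [Multiset.le_iff_count]
    intro r
    by_cases hr : r ∈ s
    · rw [Polynomial.count_roots]
      obtain ⟨i, _, rfl⟩ := Multiset.mem_map.mp hr
      calc s.count _ ≤ 1 := Multiset.nodup_iff_count_le_one.mp hsnodup _
        _ ≤ _ := (Polynomial.rootMultiplicity_pos hQ0).mpr (hroot i)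
    · rw [Multiset.count_eq_zero_of_notMem hr]
      exact Nat.zero_le _
  have hdvdQ : (s.map fun r => Polynomial.X - Polynomial.C r).prod ∣ Q :=
    (Multiset.prod_X_sub_C_dvd_iff_le_roots hQ0 s).mpr hsle
  have hDprod : (s.map fun r => Polynomial.X - Polynomial.C r).prod
      = ∏ i : Fin n, (Polynomial.X - Polynomial.C (x ^ (a i : ℕ))) := by
    rw [hs, Multiset.map_map]
    rfl
  rw [hDprod] at hdvdQ
  obtain ⟨T, hT⟩ := hdvdQ
  -- push everything through φ
  have hmapD : ((∏ i : Fin n, (Polynomial.X - Polynomial.C (x ^ (a i : ℕ)))).map φ)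
      = (Polynomial.X - 1) ^ n := by
    rw [Polynomial.map_prod]
    have h10 : ∀ i : Fin n, ((Polynomial.X - Polynomial.C (x ^ (a i : ℕ))).map φ)
        = Polynomial.X - 1 := by
      intro i
      rw [Polynomial.map_sub, Polynomial.map_X, Polynomial.map_C, map_pow, hφx, one_pow,
        Polynomial.C_1]
    rw [Finset.prod_congr rfl fun i _ => h10 i, Finset.prod_const]
    congr 1
    simp
  have hmapQ : Q.map φ = ∑ j : Fin n, Polynomial.C (φ (d j)) * Polynomial.X ^ (b j : ℕ) := by
    rw [hQdef, Polynomial.map_sum]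
    exact Finset.sum_congr rfl fun j _ => by
      rw [Polynomial.map_mul, Polynomial.map_C, Polynomial.map_pow, Polynomial.map_X]
  have hfinal : ((Polynomial.X - 1) ^ n : (ZMod N)[X]) ∣
      ∑ j : Fin n, Polynomial.C (φ (d j)) * Polynomial.X ^ (b j : ℕ) := by
    rw [← hmapQ, ← hmapD, hT, Polynomial.map_mul]
    exact Dvd.intro _ rfl
  have := tao_lemma n (fun j => (b j : ℕ))
    (fun i j h => hb (Fin.val_injective h)) (fun j => (b j).2) (fun j => φ (d j)) hfinal j₁
  exact hj₁ this


end Chebotarev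

lemma dft_entry (N : ℕ) (hN : 0 < N) (j k : Fin N) :
    dftMatrix N j k = ((1 / Real.sqrt N : ℝ) : ℂ) *
      (Complex.exp (-(2 * Real.pi * Complex.I) / N)) ^ ((j : ℕ) * (k : ℕ)) := by
  rw [dftMatrix, Matrix.of_apply, ← Complex.exp_nat_mul]
  congr 1
  have hN0 : (N : ℂ) ≠ 0 := Nat.cast_ne_zero.mpr hN.ne'
  field_simp
  push_cast
  ring

lemma dft_cols_li (N P : ℕ) (hN : N.Prime) (r : Fin P ↪ Fin N) {n : ℕ} (hnP : n ≤ P)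
    (k : Fin n → Fin N) (hk : Function.Injective k) :
    LinearIndependent ℂ (fun j : Fin n => fun i : Fin P => dftMatrix N (r i) (k j)) := by
  set ω : ℂ := Complex.exp (-(2 * Real.pi * Complex.I) / N) with hω
  have hωprim : IsPrimitiveRoot ω N := by
    have h1 := Complex.isPrimitiveRoot_exp N hN.ne_zero
    have h2 : ω = (Complex.exp (2 * Real.pi * Complex.I / N))⁻¹ := by
      rw [hω, ← Complex.exp_neg, neg_div]
    rw [h2]
    exact h1.inv
  set ρ : Fin n → Fin P := Fin.castLE hnP with hρ
  set A : Matrix (Fin n) (Fin n) ℂ :=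
    Matrix.of (fun i j => dftMatrix N (r (ρ i)) (k j)) with hA
  have hAdet : A.det ≠ 0 := by
    have hA2 : A = ((1 / Real.sqrt N : ℝ) : ℂ) •
        Matrix.of (fun i j : Fin n => ω ^ (((r (ρ i)) : ℕ) * (k j : ℕ))) := by
      ext i j
      rw [hA, Matrix.of_apply, dft_entry N hN.pos]
      simp [smul_eq_mul, hω]
    rw [hA2, Matrix.det_smul]
    refine mul_ne_zero (pow_ne_zero _ ?_) ?_
    · have : Real.sqrt N ≠ 0 := by
        rw [Real.sqrt_ne_zero']
        exact_mod_cast hN.pos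
      simp [this]
    · exact chebotarev hN hωprim _ _ (fun u v h => (Fin.castLE_injective hnP) (r.injective h)) hk
  have hunit : IsUnit A := (Matrix.isUnit_iff_isUnit_det A).mpr (isUnit_iff_ne_zero.mpr hAdet)
  have hcols : LinearIndependent ℂ (fun j : Fin n => Aᵀ j) :=
    (Matrix.linearIndependent_cols_iff_isUnit).mpr hunit
  refine LinearIndependent.of_comp (LinearMap.funLeft ℂ ℂ ρ) ?_
  exact hcols


/-- Let `N` be prime, `R` a set of `P` rows (the embedding `r`), and `1 ≤ S ≤ P − 1`.
If `C₁`, `C₂` are distinct `S`-element column sets (embeddings `c₁`, `c₂` with distinct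
ranges), then the column space of `F(R,C₂)` is not contained in that of `F(R,C₁)`;
in particular the two column spaces are distinct `S`-dimensional subspaces of `ℂ^P`,
and some column of `F(R,C₂)` lies outside the column space of `F(R,C₁)` (so the
orthogonal projection of `F(R,C₂)` onto the orthogonal complement of the column space
of `F(R,C₁)` is nonzero). -/
theorem dft_column_spaces_not_nested (N P S : ℕ) (hN : N.Prime)
    (hS : 1 ≤ S) (hSP : S + 1 ≤ P) (r : Fin P ↪ Fin N)
    (c₁ c₂ : Fin S ↪ Fin N) (hne : Set.range (⇑c₁) ≠ Set.range (⇑c₂)) :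
    ¬ (Submodule.span ℂ
          (Set.range fun j : Fin S => fun i : Fin P => dftMatrix N (r i) (c₂ j)) ≤
        Submodule.span ℂ
          (Set.range fun j : Fin S => fun i : Fin P => dftMatrix N (r i) (c₁ j))) ∧
      Submodule.span ℂ
          (Set.range fun j : Fin S => fun i : Fin P => dftMatrix N (r i) (c₁ j)) ≠
        Submodule.span ℂ
          (Set.range fun j : Fin S => fun i : Fin P => dftMatrix N (r i) (c₂ j)) ∧
      Module.finrank ℂ
          (Submodule.span ℂ
            (Set.range fun j : Fin S => fun i : Fin P => dftMatrix N (r i) (c₁ j))) = S ∧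
      Module.finrank ℂ
          (Submodule.span ℂ
            (Set.range fun j : Fin S => fun i : Fin P => dftMatrix N (r i) (c₂ j))) = S ∧
      ∃ j : Fin S,
        (fun i : Fin P => dftMatrix N (r i) (c₂ j)) ∉
          Submodule.span ℂ
            (Set.range fun j : Fin S => fun i : Fin P => dftMatrix N (r i) (c₁ j)) := by
  classical
  have hSP' : S ≤ P := Nat.le_of_succ_le hSP
  -- a column of C₂ not among the C₁ columns
  obtain ⟨j₀, hj₀⟩ : ∃ j₀ : Fin S, c₂ j₀ ∉ Set.range (⇑c₁) := by
    by_contra h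
    push_neg at h
    apply hne
    have h1 : (Finset.univ.image (⇑c₂) : Finset (Fin N)) ⊆ Finset.univ.image (⇑c₁) := by
      intro z hz
      obtain ⟨j, -, rfl⟩ := Finset.mem_image.mp hz
      obtain ⟨j', hj'⟩ := h j
      exact Finset.mem_image.mpr ⟨j', Finset.mem_univ _, hj'⟩
    have h2 : (Finset.univ.image (⇑c₂) : Finset (Fin N)) = Finset.univ.image (⇑c₁) :=
      Finset.eq_of_subset_of_card_le h1 (by
        rw [Finset.card_image_of_injective _ c₁.injective,
          Finset.card_image_of_injective _ c₂.injective])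
    have h3 : ∀ f : Fin S ↪ Fin N, Set.range (⇑f) = ↑(Finset.univ.image (⇑f)) := by
      intro f
      rw [Finset.coe_image, Finset.coe_univ, Set.image_univ]
    rw [h3 c₁, h3 c₂, h2]
  -- the snoc column family
  set v : Fin P → ℂ := fun i => dftMatrix N (r i) (c₂ j₀) with hv
  set k : Fin (S+1) → Fin N := Fin.snoc (⇑c₁) (c₂ j₀) with hk
  have hkinj : Function.Injective k := by
    intro u w huw
    rcases Fin.eq_castSucc_or_eq_last u with ⟨u', rfl⟩ | rfl <;>
      rcases Fin.eq_castSucc_or_eq_last w with ⟨w', rfl⟩ | rfl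
    · rw [hk, Fin.snoc_castSucc, Fin.snoc_castSucc] at huw
      exact congrArg Fin.castSucc (c₁.injective huw)
    · rw [hk, Fin.snoc_castSucc, Fin.snoc_last] at huw
      exact absurd ⟨u', huw⟩ hj₀
    · rw [hk, Fin.snoc_castSucc, Fin.snoc_last] at huw
      exact absurd ⟨w', huw.symm⟩ hj₀
    · rfl
  have L1 := dft_cols_li N P hN r hSP' (⇑c₁) c₁.injective
  have L2 := dft_cols_li N P hN r hSP' (⇑c₂) c₂.injective
  have L3 := dft_cols_li N P hN r hSP k hkinj
  have hfam : (fun j : Fin (S+1) => fun i : Fin P => dftMatrix N (r i) (k j))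
      = Fin.snoc (fun j : Fin S => fun i : Fin P => dftMatrix N (r i) (c₁ j)) v := by
    funext j
    rcases Fin.eq_castSucc_or_eq_last j with ⟨j', rfl⟩ | rfl
    · rw [Fin.snoc_castSucc]
      funext i
      rw [hk, Fin.snoc_castSucc]
    · rw [Fin.snoc_last]
      funext i
      rw [hk, Fin.snoc_last]
  rw [hfam, linearIndependent_fin_snoc] at L3
  obtain ⟨-, hnotmem⟩ := L3
  refine ⟨?_, ?_, ?_, ?_, ⟨j₀, hnotmem⟩⟩
  · intro hle
    exact hnotmem (hle (Submodule.subset_span ⟨j₀, rfl⟩))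
  · intro heq
    apply hnotmem
    rw [heq]
    exact Submodule.subset_span ⟨j₀, rfl⟩
  · rw [finrank_span_eq_card L1, Fintype.card_fin]
  · rw [finrank_span_eq_card L2, Fintype.card_fin]
end

section
/- Let N be a prime number, let F be the N-point unitary DFT matrix, let S ≥ 1, set P = S + 1, and let R ⊆ {0,…,N−1} with |R| = P. If C₁ and C₂ are distinct S-element subsets of {0,…,N−1}, then the intersection of the column space of F(R,C₁) and the column space of F(R,C₂) is a subspace of ℂ^P of dimension exactly S − 1. -/
open Matrix Complex

section Cheb
open Finset Polynomial


lemma aux_sum_card (n : ℕ) : ∀ s : Finset ℕ, s.card = n →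
    ((∑ i ∈ range n, i) ≤ ∑ x ∈ s, x ∧
      ((∑ x ∈ s, x) = (∑ i ∈ range n, i) → s = range n)) := by
  induction n with
  | zero => intro s hs; simp [Finset.card_eq_zero.mp hs]
  | succ n ih =>
    intro s hs
    have hne : s.Nonempty := Finset.card_pos.mp (by omega)
    set M := s.max' hne with hM
    have hMs : M ∈ s := s.max'_mem hne
    have hsub : s ⊆ range (M + 1) := by
      intro x hx
      simp only [Finset.mem_range]
      exact Nat.lt_succ_of_le (s.le_max' x hx)
    have hcard : n + 1 ≤ M + 1 := by
      simpa [hs] using Finset.card_le_card hsub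
    have hMn : n ≤ M := by omega
    have hce : (s.erase M).card = n := by rw [Finset.card_erase_of_mem hMs, hs]; omega
    obtain ⟨ih1, ih2⟩ := ih (s.erase M) hce
    have hsum : ∑ x ∈ s.erase M, x + M = ∑ x ∈ s, x := Finset.sum_erase_add s _ hMs
    have hr : ∑ i ∈ range (n+1), i = (∑ i ∈ range n, i) + n := Finset.sum_range_succ _ _
    constructor
    · omega
    · intro he
      have hM' : M = n := by omega
      have he' : ∑ x ∈ s.erase M, x = ∑ i ∈ range n, i := by omega
      have := ih2 he'
      have : s = insert M (s.erase M) := (Finset.insert_erase hMs).symm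
      rw [this, ih2 he', hM', Finset.range_add_one]

lemma aux_sum_inj {n : ℕ} (l : Fin n → ℕ) (hl : Function.Injective l) :
    (∑ i ∈ range n, i) ≤ ∑ i, l i ∧
      ((∑ i, l i) = (∑ i ∈ range n, i) → Finset.image l Finset.univ = range n) := by
  have hcard : (Finset.image l Finset.univ).card = n := by
    rw [Finset.card_image_of_injective _ hl, Finset.card_univ, Fintype.card_fin]
  have hsum : (∑ x ∈ Finset.image l Finset.univ, x) = ∑ i, l i :=
    Finset.sum_image fun a _ b _ h => hl h
  obtain ⟨h1, h2⟩ := aux_sum_card n (Finset.image l Finset.univ) hcard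
  exact ⟨hsum ▸ h1, fun h => h2 (hsum.symm ▸ h)⟩

lemma aux_choose_cast (d k : ℕ) :
    (d.choose k : ℚ) = (descPochhammer ℚ k).eval (d : ℚ) / (Nat.factorial k : ℚ) := by
  rw [descPochhammer_eval_eq_descFactorial, Nat.descFactorial_eq_factorial_mul_choose]
  push_cast
  field_simp


noncomputable def fpol (D l : ℕ) : ℚ[X] :=
  ∑ k ∈ range (D + 1), monomial k ((descPochhammer ℚ k).coeff l / k.factorial)

lemma fpol_coeff (D l j : ℕ) :
    (fpol D l).coeff j =
      if j ∈ range (D + 1) then (descPochhammer ℚ j).coeff l / j.factorial else 0 := by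
  rw [fpol, finset_sum_coeff]
  simp only [Polynomial.coeff_monomial]
  rw [Finset.sum_ite_eq' (range (D + 1)) j
    (fun k => (descPochhammer ℚ k).coeff l / k.factorial)]

lemma fpol_coeff_eq_zero_of_lt (D l j : ℕ) (hj : j < l) : (fpol D l).coeff j = 0 := by
  rw [fpol_coeff]
  split
  · rw [Polynomial.coeff_eq_zero_of_natDegree_lt, zero_div]
    rw [descPochhammer_natDegree]; exact hj
  · rfl

lemma X_pow_dvd_fpol (D l : ℕ) : X ^ l ∣ fpol D l :=
  Polynomial.X_pow_dvd_iff.mpr fun j hj => fpol_coeff_eq_zero_of_lt D l j hj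

lemma fpol_coeff_self (D l : ℕ) (h : l ≤ D) :
    (fpol D l).coeff l = 1 / l.factorial := by
  rw [fpol_coeff, if_pos (by simp; omega)]
  congr 1
  have h1 : (descPochhammer ℚ l).Monic := monic_descPochhammer ℚ l
  have h2 : (descPochhammer ℚ l).natDegree = l := descPochhammer_natDegree ℚ l
  have h3 := h1.coeff_natDegree
  rw [h2] at h3; exact h3

lemma aux_add_pow (D d : ℕ) (hd : d ≤ D) :
    ((1 + X : ℚ[X])) ^ d = ∑ l ∈ range (D + 1), C ((d : ℚ) ^ l) * fpol D l := by
  have key : ∀ k ∈ range (D + 1),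
      X ^ k * (d.choose k : ℚ[X]) =
        ∑ l ∈ range (D + 1),
          C ((d : ℚ) ^ l) * monomial k ((descPochhammer ℚ k).coeff l / k.factorial) := by
    intro k hk
    simp only [Finset.mem_range] at hk
    have : ∀ l, C ((d : ℚ) ^ l) * monomial k ((descPochhammer ℚ k).coeff l / k.factorial)
        = monomial k ((d : ℚ) ^ l * ((descPochhammer ℚ k).coeff l / k.factorial)) := by
      intro l; rw [Polynomial.C_mul_monomial]
    rw [Finset.sum_congr rfl fun l _ => this l, ← map_sum (monomial k)]
    have heval : (descPochhammer ℚ k).eval (d : ℚ)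
        = ∑ l ∈ range (D + 1), (descPochhammer ℚ k).coeff l * (d : ℚ) ^ l := by
      rw [eval_eq_sum_range' (n := D + 1) (by rw [descPochhammer_natDegree]; omega)]
    have : (∑ l ∈ range (D + 1), (d : ℚ) ^ l * ((descPochhammer ℚ k).coeff l / k.factorial))
        = (d.choose k : ℚ) := by
      rw [aux_choose_cast, heval, Finset.sum_div]
      apply Finset.sum_congr rfl
      intro l _; ring
    rw [this, ← Polynomial.C_mul_X_pow_eq_monomial, mul_comm, Polynomial.C_eq_natCast]
  have h1 : ((1 + X : ℚ[X])) ^ d = ∑ k ∈ range (D + 1), X ^ k * (d.choose k : ℚ[X]) := by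
    rw [add_comm, add_pow]
    rw [Finset.sum_subset (Finset.range_subset_range.mpr (by omega : d + 1 ≤ D + 1))]
    · exact Finset.sum_congr rfl fun k _ => by rw [one_pow, mul_one]
    · intro x _ hx
      simp only [Finset.mem_range, not_lt] at hx
      simp [Nat.choose_eq_zero_of_lt (show d < x by omega)]
  rw [h1, Finset.sum_congr rfl key, Finset.sum_comm]
  apply Finset.sum_congr rfl
  intro l _
  rw [fpol, Finset.mul_sum]


section S3
variable {n D : ℕ} (a b : Fin n → ℕ)

noncomputable def Wdet (b : Fin n → ℕ) (l : Fin n → ℕ) : ℚ :=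
  (Matrix.of fun i j : Fin n => (b j : ℚ) ^ (l i)).det

lemma Wdet_eq_zero {b l : Fin n → ℕ} (h : ¬ Function.Injective l) : Wdet b l = 0 := by
  rw [Function.not_injective_iff] at h
  obtain ⟨i, j, hij, hne⟩ := h
  exact Matrix.det_zero_of_row_eq hne (by funext k; simp [hij])

noncomputable def fpol' (D : ℕ) (a : Fin n → ℕ) (l : Fin n → ℕ) : ℚ[X] :=
  ∏ i, (Polynomial.C ((a i : ℚ) ^ (l i)) * fpol D (l i))

noncomputable def hpoly (n : ℕ) (a b : Fin n → ℕ) : ℚ[X] :=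
  (Matrix.of fun i j : Fin n => ((1 + X : ℚ[X])) ^ (a i * b j)).det

lemma hpoly_expand (hab : ∀ i j, a i * b j ≤ D) :
    hpoly n a b = ∑ l ∈ Fintype.piFinset (fun _ : Fin n => range (D + 1)),
      fpol' D a l * Polynomial.C (Wdet b l) := by
  have hentry : ∀ i j : Fin n, ((1 + X : ℚ[X])) ^ (a i * b j)
      = ∑ l ∈ range (D + 1),
          (Polynomial.C ((a i : ℚ) ^ l) * fpol D l) * Polynomial.C ((b j : ℚ) ^ l) := by
    intro i j
    rw [aux_add_pow D (a i * b j) (hab i j)]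
    apply Finset.sum_congr rfl
    intro l _
    rw [mul_right_comm, ← Polynomial.C_mul, ← mul_pow]
    norm_num
  have step : hpoly n a b = (Matrix.detRowAlternating (R := ℚ[X]) (n := Fin n)).toMultilinearMap
      (fun i : Fin n => ∑ l ∈ range (D + 1),
        (fun j : Fin n => (Polynomial.C ((a i : ℚ) ^ l) * fpol D l) * Polynomial.C ((b j : ℚ) ^ l))) := by
    have hM : (Matrix.of fun i j : Fin n => ((1 + X : ℚ[X])) ^ (a i * b j))
        = fun i : Fin n => ∑ l ∈ range (D + 1),
            (fun j : Fin n => (Polynomial.C ((a i : ℚ) ^ l) * fpol D l) * Polynomial.C ((b j : ℚ) ^ l)) := by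
      funext i j
      rw [Finset.sum_apply]
      exact hentry i j
    rw [hpoly, hM]
    rfl
  rw [step, (Matrix.detRowAlternating (R := ℚ[X]) (n := Fin n)).toMultilinearMap.map_sum_finset]
  apply Finset.sum_congr rfl
  intro l _
  have : ((Matrix.detRowAlternating (R := ℚ[X]) (n := Fin n)).toMultilinearMap
      (fun i : Fin n => fun j : Fin n => (Polynomial.C ((a i : ℚ) ^ (l i)) * fpol D (l i)) * Polynomial.C ((b j : ℚ) ^ (l i))) : ℚ[X])
      = (Matrix.of fun i j : Fin n =>
          (Polynomial.C ((a i : ℚ) ^ (l i)) * fpol D (l i)) * Polynomial.C ((b j : ℚ) ^ (l i))).det := rfl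
  rw [this]
  have : (Matrix.of fun i j : Fin n =>
      (Polynomial.C ((a i : ℚ) ^ (l i)) * fpol D (l i)) * Polynomial.C ((b j : ℚ) ^ (l i)))
      = Matrix.of fun i j : Fin n =>
        (Polynomial.C ((a i : ℚ) ^ (l i)) * fpol D (l i)) * (Matrix.of fun i j : Fin n => Polynomial.C ((b j : ℚ) ^ (l i))) i j := rfl
  rw [this, Matrix.det_mul_column]
  congr 1
  rw [Wdet, RingHom.map_det]
  congr 1

lemma fpol'_coeff_lt {l : Fin n → ℕ} {K : ℕ} (hK : K < ∑ i, l i) :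
    (fpol' D a l).coeff K = 0 := by
  have hdvd : (X : ℚ[X]) ^ (∑ i, l i) ∣ fpol' D a l := by
    rw [← Finset.prod_pow_eq_pow_sum]
    exact Finset.prod_dvd_prod_of_dvd _ _ fun i _ =>
      Dvd.dvd.mul_left (X_pow_dvd_fpol D (l i)) _
  exact Polynomial.X_pow_dvd_iff.mp hdvd K hK

lemma fpol'_coeff_sum {l : Fin n → ℕ} (hD : ∀ i, l i ≤ D) :
    (fpol' D a l).coeff (∑ i, l i) = ∏ i, ((a i : ℚ) ^ (l i) / (l i).factorial) := by
  have hu : ∀ i : Fin n, ∃ u : ℚ[X], fpol D (l i) = X ^ (l i) * u :=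
    fun i => X_pow_dvd_fpol D (l i)
  choose u hu using hu
  have hprod : fpol' D a l = X ^ (∑ i, l i) * ∏ i, (Polynomial.C ((a i : ℚ) ^ (l i)) * u i) := by
    rw [fpol', ← Finset.prod_pow_eq_pow_sum, ← Finset.prod_mul_distrib]
    apply Finset.prod_congr rfl
    intro i _
    rw [hu i]; ring
  have hcu : ∀ i, (u i).coeff 0 = 1 / (l i).factorial := by
    intro i
    have h1 : (fpol D (l i)).coeff (l i) = 1 / (l i).factorial := fpol_coeff_self D (l i) (hD i)
    have h2 : (fpol D (l i)).coeff (l i) = (u i).coeff 0 := by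
      rw [hu i]
      have := Polynomial.coeff_X_pow_mul (u i) (l i) 0
      rwa [zero_add] at this
    rw [← h2, h1]
  calc (fpol' D a l).coeff (∑ i, l i)
      = (∏ i, (Polynomial.C ((a i : ℚ) ^ (l i)) * u i)).coeff 0 := by
        rw [hprod]
        have := Polynomial.coeff_X_pow_mul (∏ i, (Polynomial.C ((a i : ℚ) ^ (l i)) * u i)) (∑ i, l i) 0
        rwa [zero_add] at this
    _ = ∏ i, ((Polynomial.C ((a i : ℚ) ^ (l i)) * u i)).coeff 0 := by
        simp only [← Polynomial.constantCoeff_apply, map_prod]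
    _ = ∏ i, ((a i : ℚ) ^ (l i) / (l i).factorial) := by
        apply Finset.prod_congr rfl
        intro i _
        rw [Polynomial.mul_coeff_zero, Polynomial.coeff_C_zero, hcu i, mul_one_div]
end S3
section S4
variable {n D : ℕ} (a b : Fin n → ℕ)

lemma hpoly_coeff_eq_zero (hab : ∀ i j, a i * b j ≤ D) {K : ℕ}
    (hK : K < ∑ i ∈ range n, i) : (hpoly n a b).coeff K = 0 := by
  rw [hpoly_expand a b hab, finset_sum_coeff]
  apply Finset.sum_eq_zero
  intro l _
  rw [Polynomial.coeff_mul_C]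
  by_cases hinj : Function.Injective l
  · have h1 := (aux_sum_inj l hinj).1
    rw [fpol'_coeff_lt a (lt_of_lt_of_le hK h1), zero_mul]
  · rw [Wdet_eq_zero hinj, mul_zero]

lemma hpoly_coeff_main (hab : ∀ i j, a i * b j ≤ D) (hnD : n ≤ D + 1) :
    (hpoly n a b).coeff (∑ i ∈ range n, i) * (∏ i ∈ range n, (i.factorial : ℚ))
      = (Matrix.vandermonde fun i : Fin n => (a i : ℚ)).det *
        (Matrix.vandermonde fun i : Fin n => (b i : ℚ)).det := by
  classical
  set m := ∑ i ∈ range n, i with hm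
  set ι : Equiv.Perm (Fin n) → (Fin n → ℕ) := fun σ i => (σ i : ℕ) with hι
  have hιinj : Function.Injective ι := by
    intro σ τ h
    ext i
    exact congrFun h i
  have hsum_perm : ∀ σ : Equiv.Perm (Fin n), (∑ i : Fin n, (ι σ i)) = m := by
    intro σ
    rw [hι]
    simp only
    rw [Equiv.sum_comp σ (fun i : Fin n => (i : ℕ)), hm]
    exact Fin.sum_univ_eq_sum_range (fun i => i) n
  have hsub : (Finset.univ.image ι) ⊆ Fintype.piFinset (fun _ : Fin n => range (D + 1)) := by
    intro l hl
    simp only [Finset.mem_image] at hl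
    obtain ⟨σ, _, rfl⟩ := hl
    rw [Fintype.mem_piFinset]
    intro i
    simp only [Finset.mem_range]
    show (σ i : ℕ) < D + 1
    have : (σ i : ℕ) < n := (σ i).isLt
    omega
  have hzero : ∀ l ∈ Fintype.piFinset (fun _ : Fin n => range (D + 1)),
      l ∉ Finset.univ.image ι → (fpol' D a l).coeff m * Wdet b l = 0 := by
    intro l _ hnotmem
    by_cases hinj : Function.Injective l
    · obtain ⟨h1, h2⟩ := aux_sum_inj l hinj
      rcases lt_or_eq_of_le h1 with hlt | heq
      · rw [fpol'_coeff_lt a hlt, zero_mul]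
      · exfalso
        apply hnotmem
        have himg := h2 heq.symm
        have hlt : ∀ i, l i < n := by
          intro i
          have : l i ∈ Finset.image l Finset.univ := Finset.mem_image_of_mem l (Finset.mem_univ i)
          rw [himg, Finset.mem_range] at this
          exact this
        set σ' : Fin n → Fin n := fun i => ⟨l i, hlt i⟩ with hσ'
        have hσinj : Function.Injective σ' := by
          intro x y h
          apply hinj
          have := congrArg Fin.val h
          exact this
        have hbij := Finite.injective_iff_bijective.mp hσinj
        refine Finset.mem_image.mpr ⟨Equiv.ofBijective σ' hbij, Finset.mem_univ _, ?_⟩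
        funext i
        rfl
    · rw [Wdet_eq_zero hinj, mul_zero]
  have hVa : (Matrix.vandermonde fun i : Fin n => (a i : ℚ)).det
      = ∑ σ : Equiv.Perm (Fin n),
          ((Equiv.Perm.sign σ : ℤ) : ℚ) * ∏ i, (a i : ℚ) ^ (ι σ i) := by
    rw [← Matrix.det_transpose, Matrix.det_apply]
    apply Finset.sum_congr rfl
    intro σ _
    rw [Units.smul_def, zsmul_eq_mul]
    congr 1
  have hW : ∀ σ : Equiv.Perm (Fin n),
      Wdet b (ι σ) = ((Equiv.Perm.sign σ : ℤ) : ℚ) *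
        (Matrix.vandermonde fun i : Fin n => (b i : ℚ)).det := by
    intro σ
    have hmat : (Matrix.of fun i j : Fin n => (b j : ℚ) ^ (ι σ i))
        = (Matrix.transpose (Matrix.vandermonde fun i : Fin n => (b i : ℚ))).submatrix σ id := by
      ext i j
      simp [Matrix.vandermonde, hι]
    rw [Wdet, hmat, Matrix.det_permute, Matrix.det_transpose]
  have hfac_ne : (∏ i ∈ range n, (i.factorial : ℚ)) ≠ 0 := by
    apply Finset.prod_ne_zero_iff.mpr
    intro i _
    exact_mod_cast Nat.factorial_ne_zero i
  have hterm : ∀ σ : Equiv.Perm (Fin n),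
      (fpol' D a (ι σ)).coeff m * Wdet b (ι σ)
        = (((Equiv.Perm.sign σ : ℤ) : ℚ) * ∏ i, (a i : ℚ) ^ (ι σ i)) *
          ((∏ i ∈ range n, (i.factorial : ℚ))⁻¹ *
            (Matrix.vandermonde fun i : Fin n => (b i : ℚ)).det) := by
    intro σ
    have hD' : ∀ i, ι σ i ≤ D := by
      intro i
      show (σ i : ℕ) ≤ D
      have : (σ i : ℕ) < n := (σ i).isLt
      omega
    have h1 : (fpol' D a (ι σ)).coeff m = ∏ i, ((a i : ℚ) ^ (ι σ i) / (ι σ i).factorial) := by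
      rw [← hsum_perm σ]
      exact fpol'_coeff_sum a hD'
    have h2 : (∏ i, ((a i : ℚ) ^ (ι σ i) / (ι σ i).factorial))
        = (∏ i, (a i : ℚ) ^ (ι σ i)) * (∏ i ∈ range n, (i.factorial : ℚ))⁻¹ := by
      rw [Finset.prod_div_distrib, div_eq_mul_inv]
      congr 2
      have h3 : ∏ x : Fin n, ((ι σ x).factorial : ℚ)
          = ∏ x : Fin n, (((σ x : ℕ)).factorial : ℚ) := rfl
      rw [h3, Equiv.prod_comp σ (fun i : Fin n => ((i : ℕ).factorial : ℚ))]
      exact Fin.prod_univ_eq_prod_range (fun i => (i.factorial : ℚ)) n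
    rw [h1, h2, hW σ]
    ring
  calc (hpoly n a b).coeff m * (∏ i ∈ range n, (i.factorial : ℚ))
      = (∑ l ∈ Fintype.piFinset (fun _ : Fin n => range (D + 1)),
          (fpol' D a l).coeff m * Wdet b l) * (∏ i ∈ range n, (i.factorial : ℚ)) := by
        rw [hpoly_expand a b hab, finset_sum_coeff]
        congr 1
        apply Finset.sum_congr rfl
        intro l _
        rw [Polynomial.coeff_mul_C]
    _ = (∑ σ : Equiv.Perm (Fin n), (fpol' D a (ι σ)).coeff m * Wdet b (ι σ)) *
          (∏ i ∈ range n, (i.factorial : ℚ)) := by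
        rw [← Finset.sum_subset hsub hzero, Finset.sum_image fun σ _ τ _ h => hιinj h]
    _ = ((Matrix.vandermonde fun i : Fin n => (a i : ℚ)).det *
          (∏ i ∈ range n, (i.factorial : ℚ))⁻¹ *
          (Matrix.vandermonde fun i : Fin n => (b i : ℚ)).det) *
          (∏ i ∈ range n, (i.factorial : ℚ)) := by
        rw [Finset.sum_congr rfl fun σ _ => hterm σ, ← Finset.sum_mul, ← hVa]
        ring
    _ = _ := by
        field_simp
end S4
section S5
variable {n : ℕ} (a b : Fin n → ℕ)

noncomputable def hpolyZ (n : ℕ) (a b : Fin n → ℕ) : Polynomial ℤ :=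
  (Matrix.of fun i j : Fin n => ((1 + X : Polynomial ℤ)) ^ (a i * b j)).det

lemma hpolyZ_map : (hpolyZ n a b).map (Int.castRingHom ℚ) = hpoly n a b := by
  rw [hpolyZ, hpoly, ← Polynomial.coe_mapRingHom, RingHom.map_det]
  congr 1
  ext i j
  simp [Matrix.map_apply]

lemma hpolyZ_coeff_eq_zero {D : ℕ} (hab : ∀ i j, a i * b j ≤ D) {K : ℕ}
    (hK : K < ∑ i ∈ range n, i) : (hpolyZ n a b).coeff K = 0 := by
  have h := hpoly_coeff_eq_zero a b hab hK
  rw [← hpolyZ_map a b, Polynomial.coeff_map] at h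
  simpa using h

lemma hpolyZ_coeff_main {D : ℕ} (hab : ∀ i j, a i * b j ≤ D) (hnD : n ≤ D + 1) :
    (hpolyZ n a b).coeff (∑ i ∈ range n, i) * (∏ i ∈ range n, (i.factorial : ℤ))
      = (Matrix.vandermonde fun i : Fin n => (a i : ℤ)).det *
        (Matrix.vandermonde fun i : Fin n => (b i : ℤ)).det := by
  have h := hpoly_coeff_main a b hab hnD
  rw [← hpolyZ_map a b, Polynomial.coeff_map] at h
  have hv : ∀ c : Fin n → ℕ, (((Matrix.vandermonde fun i : Fin n => (c i : ℤ)).det : ℤ) : ℚ)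
      = (Matrix.vandermonde fun i : Fin n => (c i : ℚ)).det := by
    intro c
    calc (((Matrix.vandermonde fun i : Fin n => (c i : ℤ)).det : ℤ) : ℚ)
        = (Int.castRingHom ℚ) (Matrix.vandermonde fun i : Fin n => (c i : ℤ)).det := rfl
      _ = ((Matrix.vandermonde fun i : Fin n => (c i : ℤ)).map (Int.castRingHom ℚ)).det :=
          RingHom.map_det _ _
      _ = (Matrix.vandermonde fun i : Fin n => (c i : ℚ)).det := by
          congr 1
          ext i j
          simp [Matrix.map_apply, Matrix.vandermonde]
  apply (Int.cast_injective (α := ℚ))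
  simp only [Int.cast_mul, Int.cast_prod, Int.cast_natCast]
  rw [← hv a, ← hv b] at h
  exact h

lemma not_dvd_vandermonde {p : ℕ} (hp : p.Prime) {c : Fin n → ℕ}
    (hc : Function.Injective c) (hcp : ∀ i, c i < p) :
    ¬ ((p : ℤ) ∣ (Matrix.vandermonde fun i : Fin n => (c i : ℤ)).det) := by
  intro hdvd
  rw [Matrix.det_vandermonde] at hdvd
  have hprime : Prime (p : ℤ) := Nat.prime_iff_prime_int.mp hp
  obtain ⟨i, _, hi⟩ := (Prime.dvd_finset_prod_iff hprime _).mp hdvd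
  obtain ⟨j, hj, hij⟩ := (Prime.dvd_finset_prod_iff hprime _).mp hi
  have hne : c j ≠ c i := fun h => (Finset.mem_Ioi.mp hj).ne' (hc h)
  have h1 : p ∣ ((c j : ℤ) - (c i : ℤ)).natAbs := Int.natCast_dvd.mp hij
  have h2 : ((c j : ℤ) - (c i : ℤ)).natAbs ≠ 0 := by
    have : c j ≠ c i := hne
    omega
  have h3 : ((c j : ℤ) - (c i : ℤ)).natAbs < p := by
    have := hcp i; have := hcp j
    omega
  have := Nat.le_of_dvd (Nat.pos_of_ne_zero h2) h1
  omega

theorem cheb_det_ne_zero {p n : ℕ} (hp : p.Prime) (hn : n ≤ p) {a b : Fin n → ℕ}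
    (ha : Function.Injective a) (hb : Function.Injective b)
    (hap : ∀ i, a i < p) (hbp : ∀ i, b i < p)
    {ζ : ℂ} (hζ : IsPrimitiveRoot ζ p) :
    (Matrix.of fun i j : Fin n => ζ ^ (a i * b j)).det ≠ 0 := by
  haveI : Fact p.Prime := ⟨hp⟩
  set m := ∑ i ∈ range n, i with hm
  have hab : ∀ i j : Fin n, a i * b j ≤ p * p :=
    fun i j => Nat.mul_le_mul (hap i).le (hbp j).le
  have hnD : n ≤ p * p + 1 := le_trans hn (by nlinarith [hp.two_le])
  have hdet : (Matrix.of fun i j : Fin n => ζ ^ (a i * b j)).det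
      = Polynomial.aeval (ζ - 1) (hpolyZ n a b) := by
    rw [hpolyZ,
      show (Polynomial.aeval (ζ - 1))
          ((Matrix.of fun i j : Fin n => ((1 + X : Polynomial ℤ)) ^ (a i * b j)).det)
        = ((Matrix.of fun i j : Fin n => ((1 + X : Polynomial ℤ)) ^ (a i * b j)).map
            ((Polynomial.aeval (ζ - 1) : Polynomial ℤ →ₐ[ℤ] ℂ) : Polynomial ℤ →+* ℂ)).det
        from RingHom.map_det _ _]
    congr 1
    ext i j
    simp only [Matrix.map_apply, Matrix.of_apply, RingHom.coe_coe, _root_.map_pow,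
      _root_.map_add, _root_.map_one, Polynomial.aeval_X]
    rw [show (1 : ℂ) + (ζ - 1) = ζ by ring]
  intro hzero
  have hXdvd : (X : Polynomial ℤ) ^ m ∣ hpolyZ n a b :=
    Polynomial.X_pow_dvd_iff.mpr fun d hd => hpolyZ_coeff_eq_zero a b hab hd
  obtain ⟨t, ht⟩ := hXdvd
  have hζ1 : ζ - 1 ≠ 0 := sub_ne_zero.mpr (hζ.ne_one hp.one_lt)
  have haevalt : Polynomial.aeval (ζ - 1) t = 0 := by
    have h0 : Polynomial.aeval (ζ - 1) (hpolyZ n a b) = 0 := by rw [← hdet, hzero]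
    rw [ht, _root_.map_mul, _root_.map_pow, Polynomial.aeval_X] at h0
    exact (mul_eq_zero.mp h0).resolve_left (pow_ne_zero m hζ1)
  set Q : Polynomial ℤ := t.comp (X - Polynomial.C 1) with hQ
  have haevalQ : Polynomial.aeval ζ Q = 0 := by
    rw [hQ, Polynomial.aeval_comp]
    have : Polynomial.aeval ζ (X - Polynomial.C 1 : Polynomial ℤ) = ζ - 1 := by
      simp
    rw [this, haevalt]
  have hint : IsIntegral ℤ ζ := hζ.isIntegral hp.pos
  have hdvdQ : Polynomial.cyclotomic p ℤ ∣ Q := by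
    rw [Polynomial.cyclotomic_eq_minpoly hζ hp.pos]
    exact minpoly.isIntegrallyClosed_dvd hint haevalQ
  have hpdvd : (p : ℤ) ∣ Q.eval 1 := by
    obtain ⟨R, hR⟩ := hdvdQ
    have : Q.eval 1 = (Polynomial.cyclotomic p ℤ).eval 1 * R.eval 1 := by
      rw [hR, Polynomial.eval_mul]
    rw [this, Polynomial.eval_one_cyclotomic_prime]
    exact Dvd.intro _ rfl
  have hQeval : Q.eval 1 = (hpolyZ n a b).coeff m := by
    rw [hQ, Polynomial.eval_comp]
    have : (X - Polynomial.C 1 : Polynomial ℤ).eval 1 = 0 := by simp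
    rw [this, ← Polynomial.coeff_zero_eq_eval_zero]
    have := Polynomial.coeff_X_pow_mul t m 0
    rw [zero_add] at this
    rw [← this, ← ht]
  rw [hQeval] at hpdvd
  have hdvdprod : (p : ℤ) ∣ (Matrix.vandermonde fun i : Fin n => (a i : ℤ)).det *
      (Matrix.vandermonde fun i : Fin n => (b i : ℤ)).det := by
    rw [← hpolyZ_coeff_main a b hab hnD]
    exact Dvd.dvd.mul_right hpdvd _
  have hprime : Prime (p : ℤ) := Nat.prime_iff_prime_int.mp hp
  rcases hprime.dvd_mul.mp hdvdprod with h | h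
  · exact not_dvd_vandermonde hp ha hap h
  · exact not_dvd_vandermonde hp hb hbp h
end S5

end Cheb

section Final
open Finset
theorem dft_submatrix_det_ne_zero {N n : ℕ} (hN : N.Prime) (hn : n ≤ N)
    (r c : Fin n → Fin N) (hr : Function.Injective r) (hc : Function.Injective c) :
    (Matrix.of fun i j : Fin n => dftMatrix N (r i) (c j)).det ≠ 0 := by
  have hN0 : (0 : ℝ) < N := by exact_mod_cast hN.pos
  set ζ : ℂ := Complex.exp (-(2 * Real.pi * Complex.I / N)) with hζdef
  have hprim : IsPrimitiveRoot ζ N := by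
    rw [hζdef, Complex.exp_neg]
    exact (Complex.isPrimitiveRoot_exp N hN.pos.ne').inv
  have hmat : (Matrix.of fun i j : Fin n => dftMatrix N (r i) (c j))
      = ((1 / Real.sqrt N : ℝ) : ℂ) •
          (Matrix.of fun i j : Fin n => ζ ^ ((r i : ℕ) * (c j : ℕ))) := by
    ext i j
    rw [Matrix.smul_apply, Matrix.of_apply, Matrix.of_apply, smul_eq_mul]
    rw [dftMatrix, Matrix.of_apply]
    congr 1
    rw [hζdef, ← Complex.exp_nat_mul]
    congr 1
    push_cast
    ring
  rw [hmat, Matrix.det_smul]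
  apply mul_ne_zero
  · apply pow_ne_zero
    rw [Complex.ofReal_ne_zero]
    apply one_div_ne_zero
    exact Real.sqrt_ne_zero'.mpr hN0
  · exact cheb_det_ne_zero hN hn (Fin.val_injective.comp hr) (Fin.val_injective.comp hc)
      (fun i => (r i).isLt) (fun j => (c j).isLt) hprim

lemma snoc_inj {α : Type*} {k : ℕ} {c : Fin k → α} {x : α} (hc : Function.Injective c)
    (hx : x ∉ Set.range c) : Function.Injective (Fin.snoc c x : Fin (k + 1) → α) := by
  intro i j hij
  induction i using Fin.lastCases with
  | last =>
    induction j using Fin.lastCases with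
    | last => rfl
    | cast j =>
      rw [Fin.snoc_last, Fin.snoc_castSucc] at hij
      exact (hx ⟨j, hij.symm⟩).elim
  | cast i =>
    induction j using Fin.lastCases with
    | last =>
      rw [Fin.snoc_last, Fin.snoc_castSucc] at hij
      exact (hx ⟨i, hij⟩).elim
    | cast j =>
      rw [Fin.snoc_castSucc, Fin.snoc_castSucc] at hij
      exact congrArg Fin.castSucc (hc hij)


/-- Let `N` be prime, `S ≥ 1`, `P = S + 1`, and `R` a set of `P` rows (the embedding
`r`).  If `C₁`, `C₂` are distinct `S`-element column sets (embeddings `c₁`, `c₂` with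
distinct ranges), then the intersection of the column spaces of `F(R,C₁)` and
`F(R,C₂)` is a subspace of `ℂ^P` of dimension exactly `S − 1`. -/
theorem dft_column_spaces_intersection_dim (N S : ℕ) (hN : N.Prime) (hS : 1 ≤ S)
    (r : Fin (S + 1) ↪ Fin N)
    (c₁ c₂ : Fin S ↪ Fin N) (hne : Set.range (⇑c₁) ≠ Set.range (⇑c₂)) :
    Module.finrank ℂ
        ((Submodule.span ℂ
            (Set.range fun j : Fin S => fun i : Fin (S + 1) =>
              dftMatrix N (r i) (c₁ j))) ⊓
          (Submodule.span ℂ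
            (Set.range fun j : Fin S => fun i : Fin (S + 1) =>
              dftMatrix N (r i) (c₂ j))) :
          Submodule ℂ (Fin (S + 1) → ℂ)) = S - 1 := by
  classical
  have hSN : S + 1 ≤ N := by
    have := Fintype.card_le_of_embedding r
    simpa using this
  set v : Fin N → (Fin (S + 1) → ℂ) := fun y i => dftMatrix N (r i) y with hv
  have key : ∀ c : Fin (S + 1) → Fin N, Function.Injective c →
      LinearIndependent ℂ (fun j => v (c j)) := by
    intro c hc
    have hunit : IsUnit (Matrix.of fun i j : Fin (S + 1) => dftMatrix N (r i) (c j)) := by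
      rw [Matrix.isUnit_iff_isUnit_det, isUnit_iff_ne_zero]
      exact dft_submatrix_det_ne_zero hN hSN (⇑r) c r.injective hc
    have hli := Matrix.linearIndependent_cols_iff_isUnit.mpr hunit
    have heq : (fun j => v (c j))
        = fun j => (Matrix.of fun i j : Fin (S + 1) => dftMatrix N (r i) (c j))ᵀ j := by
      funext j i
      rfl
    rw [heq]
    exact hli
  have key' : ∀ c : Fin S → Fin N, Function.Injective c →
      LinearIndependent ℂ (fun j => v (c j)) := by
    intro c hc
    have hex : ∃ x : Fin N, x ∉ Set.range c := by
      by_contra h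
      push_neg at h
      have hsurj : Function.Surjective c := fun y => h y
      have := Fintype.card_le_of_surjective c hsurj
      simp only [Fintype.card_fin] at this
      omega
    obtain ⟨x, hx⟩ := hex
    have hli := key (Fin.snoc c x) (snoc_inj hc hx)
    have hli2 := hli.comp Fin.castSucc (Fin.castSucc_injective S)
    have heq : ((fun j : Fin (S + 1) => v ((Fin.snoc c x : Fin (S + 1) → Fin N) j)) ∘ Fin.castSucc)
        = fun j : Fin S => v (c j) := by
      funext j
      simp [Fin.snoc_castSucc]
    rwa [heq] at hli2
  set V₁ : Submodule ℂ (Fin (S + 1) → ℂ) := Submodule.span ℂ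
      (Set.range fun j : Fin S => fun i : Fin (S + 1) => dftMatrix N (r i) (c₁ j)) with hV₁
  set V₂ : Submodule ℂ (Fin (S + 1) → ℂ) := Submodule.span ℂ
      (Set.range fun j : Fin S => fun i : Fin (S + 1) => dftMatrix N (r i) (c₂ j)) with hV₂
  have hV₁' : V₁ = Submodule.span ℂ (Set.range fun j : Fin S => v (c₁ j)) := rfl
  have hV₂' : V₂ = Submodule.span ℂ (Set.range fun j : Fin S => v (c₂ j)) := rfl
  have h1 : Module.finrank ℂ V₁ = S := by
    rw [hV₁', finrank_span_eq_card (key' (⇑c₁) c₁.injective), Fintype.card_fin]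
  have h2 : Module.finrank ℂ V₂ = S := by
    rw [hV₂', finrank_span_eq_card (key' (⇑c₂) c₂.injective), Fintype.card_fin]
  have hncard : ∀ c : Fin S ↪ Fin N, (Set.range ⇑c).ncard = S := by
    intro c
    rw [← Set.image_univ, Set.ncard_image_of_injective _ c.injective, Set.ncard_univ,
      Nat.card_eq_fintype_card, Fintype.card_fin]
  have hxex : ∃ x, x ∈ Set.range ⇑c₂ ∧ x ∉ Set.range ⇑c₁ := by
    by_contra h
    push_neg at h
    have hsub : Set.range ⇑c₂ ⊆ Set.range ⇑c₁ := fun x hx => h x hx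
    have heq : Set.range ⇑c₂ = Set.range ⇑c₁ :=
      Set.eq_of_subset_of_ncard_le hsub (by rw [hncard c₁, hncard c₂]) (Set.finite_range _)
    exact hne heq.symm
  obtain ⟨x, hxmem, hxnot⟩ := hxex
  obtain ⟨j₀, hj₀⟩ := hxmem
  have hw := key (Fin.snoc (⇑c₁) x) (snoc_inj c₁.injective hxnot)
  have hspanle : Submodule.span ℂ
      (Set.range fun j => v ((Fin.snoc (⇑c₁) x : Fin (S + 1) → Fin N) j)) ≤ V₁ ⊔ V₂ := by
    rw [Submodule.span_le]
    rintro y ⟨j, rfl⟩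
    induction j using Fin.lastCases with
    | last =>
      apply Submodule.mem_sup_right
      simp only [Fin.snoc_last]
      rw [← hj₀, hV₂']
      exact Submodule.subset_span ⟨j₀, rfl⟩
    | cast j =>
      apply Submodule.mem_sup_left
      simp only [Fin.snoc_castSucc]
      rw [hV₁']
      exact Submodule.subset_span ⟨j, rfl⟩
  have h3 : Module.finrank ℂ ↥(V₁ ⊔ V₂) = S + 1 := by
    apply le_antisymm
    · apply le_trans (Submodule.finrank_le _)
      rw [Module.finrank_pi, Fintype.card_fin]
    · calc S + 1 = Module.finrank ℂ ↥(Submodule.span ℂ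
            (Set.range fun j => v ((Fin.snoc (⇑c₁) x : Fin (S + 1) → Fin N) j))) := by
            rw [finrank_span_eq_card hw, Fintype.card_fin]
        _ ≤ Module.finrank ℂ ↥(V₁ ⊔ V₂) := Submodule.finrank_mono hspanle
  have h4 := Submodule.finrank_sup_add_finrank_inf_eq V₁ V₂
  rw [h1, h2, h3] at h4
  omega

end Final
end

section
/- Let N be a prime number, let F be the N-point unitary DFT matrix, let R ⊆ {0,…,N−1} with |R| = P, and let S be an integer with 1 ≤ S ≤ P − 1 (i.e., P ≥ S+1). If C₁ and C₂ are distinct S-element subsets of {0,…,N−1}, then the set {h ∈ ℂ^S : F(R,C₁)·h lies in the column space of F(R,C₂)} is a proper linear subspace of ℂ^S; in particular, it has Lebesgue measure zero in ℂ^S (identified with ℝ^{2S}). -/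
open Matrix Complex MeasureTheory

open Polynomial in
/-- `X^k - X^l = (X-1) * e` with `e.eval 1 = k - l`. -/
lemma pow_sub_pow_factor (k l : ℕ) :
    ∃ e : Polynomial ℤ, (X : Polynomial ℤ) ^ k - X ^ l = (X - 1) * e ∧ e.eval 1 = (k : ℤ) - l := by
  have main : ∀ l k : ℕ, l ≤ k → ∃ e : Polynomial ℤ,
      (X : Polynomial ℤ) ^ k - X ^ l = (X - 1) * e ∧ e.eval 1 = (k : ℤ) - l := by
    intro l k hlk
    refine ⟨X ^ l * ∑ i ∈ Finset.range (k - l), X ^ i, ?_, ?_⟩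
    · have h := geom_sum_mul (X : Polynomial ℤ) (k - l)
      calc (X : Polynomial ℤ) ^ k - X ^ l = X ^ l * (X ^ (k - l) - 1) := by
            rw [mul_sub, mul_one, ← pow_add, Nat.add_sub_cancel' hlk]
        _ = (X - 1) * (X ^ l * ∑ i ∈ Finset.range (k - l), X ^ i) := by
            rw [← h]; ring
    · simp only [eval_mul, eval_pow, eval_X, one_pow, one_mul, eval_finset_sum]
      simp [Nat.cast_sub hlk]
  rcases le_total l k with h | h
  · exact main l k h
  · obtain ⟨e, he, hv⟩ := main k l h
    exact ⟨-e, by rw [mul_neg, ← he]; ring, by rw [eval_neg, hv]; ring⟩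

namespace MvPolynomial

variable {σ : Type*} [DecidableEq σ]

/-- The substitution `X i ↦ X j`. -/
noncomputable def substXX (i j : σ) : MvPolynomial σ ℤ →ₐ[ℤ] MvPolynomial σ ℤ :=
  aeval (Function.update (X : σ → MvPolynomial σ ℤ) i (X j))

lemma substXX_X_self (i j : σ) : substXX i j (X i) = X j := by
  rw [substXX, aeval_X, Function.update_self]

lemma substXX_X_ne (i j : σ) {k : σ} (hk : k ≠ i) : substXX i j (X k) = X k := by
  rw [substXX, aeval_X, Function.update_of_ne hk]

/-- substitution `X i ↦ X j` changes a polynomial by a multiple of `X i - X j`. -/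
lemma X_sub_X_dvd_sub_substXX (i j : σ) (f : MvPolynomial σ ℤ) :
    (X i - X j : MvPolynomial σ ℤ) ∣ f - substXX i j f := by
  induction f using MvPolynomial.induction_on with
  | C a => rw [show substXX i j (C a) = C a from aeval_C _ a]; simp
  | add f g hf hg =>
      have : f + g - substXX i j (f + g)
          = (f - substXX i j f) + (g - substXX i j g) := by rw [map_add]; ring
      rw [this]; exact dvd_add hf hg
  | mul_X f k hf =>
      have : f * X k - substXX i j (f * X k)
          = (f - substXX i j f) * X k + substXX i j f * (X k - substXX i j (X k)) := by
        rw [_root_.map_mul]; ring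
      rw [this]
      refine dvd_add (Dvd.dvd.mul_right hf _) (Dvd.dvd.mul_left ?_ _)
      rcases eq_or_ne k i with rfl | hk
      · rw [substXX_X_self]
      · rw [substXX_X_ne i j hk]; simp

lemma substXX_eq_zero_iff_dvd (i j : σ) (hij : i ≠ j) (f : MvPolynomial σ ℤ) :
    substXX i j f = 0 ↔ (X i - X j : MvPolynomial σ ℤ) ∣ f := by
  constructor
  · intro h
    have := X_sub_X_dvd_sub_substXX i j f
    rwa [h, sub_zero] at this
  · rintro ⟨g, rfl⟩
    rw [_root_.map_mul, map_sub, substXX_X_self, substXX_X_ne i j hij.symm, sub_self, zero_mul]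

lemma X_sub_X_ne_zero (i j : σ) (hij : i ≠ j) : (X i - X j : MvPolynomial σ ℤ) ≠ 0 := by
  intro h
  have := congrArg (eval (fun t => if t = i then (1 : ℤ) else 0)) h
  rw [map_sub, eval_X, eval_X, map_zero, if_pos rfl, if_neg hij.symm] at this
  norm_num at this

lemma prime_X_sub_X (i j : σ) (hij : i ≠ j) : Prime (X i - X j : MvPolynomial σ ℤ) := by
  refine ⟨X_sub_X_ne_zero i j hij, ?_, ?_⟩
  · intro h
    have : IsUnit (substXX i j (X i - X j : MvPolynomial σ ℤ)) := h.map _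
    rw [map_sub, substXX_X_self, substXX_X_ne i j hij.symm, sub_self] at this
    exact not_isUnit_zero this
  · intro a b hab
    rw [← substXX_eq_zero_iff_dvd i j hij] at hab ⊢
    rw [← substXX_eq_zero_iff_dvd i j hij (f := b)]
    rw [_root_.map_mul] at hab
    exact mul_eq_zero.mp hab

end MvPolynomial

lemma Prime.isRelPrime_of_not_associated {α : Type*} [CommMonoidWithZero α] [IsCancelMulZero α] {p q : α}
    (hp : Prime p) (hq : Prime q) (h : ¬ Associated p q) : IsRelPrime p q := by
  intro c hcp hcq
  by_contra hc
  obtain ⟨d, hd⟩ := hcp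
  rcases hp.irreducible.isUnit_or_isUnit hd with h1 | h1
  · exact hc h1
  · obtain ⟨u, rfl⟩ := h1
    have hpc : p ∣ c := ⟨(↑u⁻¹ : α), by rw [hd, mul_assoc, Units.mul_inv, mul_one]⟩
    exact h (hp.associated_of_dvd hq (hpc.trans hcq))

/-- A separating evaluation point for two distinct "ordered pairs". -/
lemma exists_sep_point {α : Type*} [DecidableEq α] {i j i' j' : α} (hij : i ≠ j)
    (hi'j' : i' ≠ j') (h1 : ¬(i = i' ∧ j = j')) (h2 : ¬(i = j' ∧ j = i')) :
    ∃ x : α → ℤ, x j - x i ≠ 0 ∧ x j' - x i' = 0 := by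
  by_cases h : j = i' ∨ j = j'
  · have hii' : i ≠ i' := by
      rintro rfl
      rcases h with h | h
      · exact hij h.symm
      · exact h1 ⟨rfl, h⟩
    have hij'2 : i ≠ j' := by
      rintro rfl
      rcases h with h | h
      · exact h2 ⟨rfl, h⟩
      · exact hij h.symm
    refine ⟨fun t => if t = i then 1 else 0, ?_, ?_⟩
    · simp only [if_neg (Ne.symm hij), if_pos rfl]; norm_num
    · simp only [if_neg (Ne.symm hij'2), if_neg (Ne.symm hii')]; norm_num
  · push_neg at h
    refine ⟨fun t => if t = j then 1 else 0, ?_, ?_⟩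
    · simp only [if_pos rfl, if_neg hij]; norm_num
    · simp only [if_neg (Ne.symm h.2), if_neg (Ne.symm h.1)]; norm_num

open MvPolynomial Matrix in
theorem det_zeta_pow_ne_zero {N n : ℕ} (hN : N.Prime) (hn : n ≤ N) {ζ : ℂ}
    (hζ : IsPrimitiveRoot ζ N) {a b : Fin n → Fin N} (ha : Function.Injective a)
    (hb : Function.Injective b) :
    Matrix.det (Matrix.of fun i j : Fin n => ζ ^ ((a i : ℕ) * (b j : ℕ))) ≠ 0 := by
  classical
  haveI : Fact N.Prime := ⟨hN⟩
  set D : MvPolynomial (Fin n) ℤ := Matrix.det (Matrix.of fun i j : Fin n => (X i : MvPolynomial (Fin n) ℤ) ^ (b j : ℕ)) with hD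
  set s : Finset (Σ _ : Fin n, Fin n) := Finset.univ.sigma fun i => Finset.Ioi i with hs
  have hmem : ∀ p ∈ s, p.1 < p.2 := by
    intro p hp
    rw [hs, Finset.mem_sigma] at hp
    exact Finset.mem_Ioi.mp hp.2
  -- each linear factor divides D
  have hdvd : ∀ p ∈ s, (X p.2 - X p.1 : MvPolynomial (Fin n) ℤ) ∣ D := by
    intro p hp
    have hne : p.2 ≠ p.1 := (hmem p hp).ne'
    rw [← substXX_eq_zero_iff_dvd _ _ hne]
    have hmap : substXX p.2 p.1 D =
        Matrix.det ((Matrix.of fun i j : Fin n => (X i : MvPolynomial (Fin n) ℤ) ^ (b j : ℕ)).map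
          (substXX p.2 p.1)) := by
      rw [hD, AlgHom.map_det, AlgHom.mapMatrix_apply]
    rw [hmap]
    apply Matrix.det_zero_of_row_eq hne
    funext j
    simp only [Matrix.map_apply, Matrix.of_apply, map_pow, substXX_X_self,
      substXX_X_ne _ _ hne.symm]
  -- the factors are pairwise non-associated primes, so their product divides D
  have hpair : (↑s : Set (Σ _ : Fin n, Fin n)).Pairwise
      (Function.onFun IsRelPrime fun p => (X p.2 - X p.1 : MvPolynomial (Fin n) ℤ)) := by
    intro p hp q hq hpq
    simp only [Finset.mem_coe] at hp hq
    have hps := hmem p hp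
    have hqs := hmem q hq
    refine Prime.isRelPrime_of_not_associated
      (prime_X_sub_X _ _ hps.ne') (prime_X_sub_X _ _ hqs.ne') ?_
    rintro ⟨u, hu⟩
    have h1 : ¬(p.1 = q.1 ∧ p.2 = q.2) := by
      rintro ⟨e1, e2⟩
      exact hpq (Sigma.ext e1 (heq_of_eq e2))
    have h2 : ¬(p.1 = q.2 ∧ p.2 = q.1) := by
      rintro ⟨e1, e2⟩
      exact absurd (e1 ▸ (hps.trans (e2 ▸ hqs))) (lt_irrefl _)
    obtain ⟨x, hx1, hx2⟩ := exists_sep_point hps.ne hqs.ne h1 h2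
    have heu := congrArg (MvPolynomial.eval x) hu
    simp only [_root_.map_mul, map_sub, eval_X] at heu
    rw [hx2] at heu
    rcases mul_eq_zero.mp heu with h0 | h0
    · exact hx1 h0
    · exact (u.isUnit.map (MvPolynomial.eval x)).ne_zero h0
  obtain ⟨Q, hQ⟩ : (∏ p ∈ s, (X p.2 - X p.1 : MvPolynomial (Fin n) ℤ)) ∣ D :=
    Finset.prod_dvd_of_isRelPrime hpair hdvd
  -- substitute `X i := q^i` to compute `Q` at the all-ones point
  set φ : MvPolynomial (Fin n) ℤ →ₐ[ℤ] Polynomial ℤ :=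
    aeval (fun i : Fin n => (Polynomial.X : Polynomial ℤ) ^ (i : ℕ)) with hφ
  have hφD : φ D = ∏ p ∈ s, ((Polynomial.X : Polynomial ℤ) ^ (b p.2 : ℕ)
      - Polynomial.X ^ (b p.1 : ℕ)) := by
    have hmap : φ D = Matrix.det ((Matrix.of fun i j : Fin n =>
        (X i : MvPolynomial (Fin n) ℤ) ^ (b j : ℕ)).map φ) := by rw [hD, AlgHom.map_det, AlgHom.mapMatrix_apply]
    have hmat : (Matrix.of fun i j : Fin n => (X i : MvPolynomial (Fin n) ℤ) ^ (b j : ℕ)).map φ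
        = (Matrix.vandermonde fun j : Fin n =>
            (Polynomial.X : Polynomial ℤ) ^ (b j : ℕ))ᵀ := by
      funext i j
      simp only [Matrix.map_apply, Matrix.of_apply, map_pow, hφ, aeval_X,
        Matrix.transpose_apply, Matrix.vandermonde_apply, ← pow_mul]
      rw [mul_comm]
    rw [hmap, hmat, Matrix.det_transpose, Matrix.det_vandermonde, hs]
    exact Finset.prod_sigma' _ _ _
  have hφV : φ (∏ p ∈ s, (X p.2 - X p.1 : MvPolynomial (Fin n) ℤ)) = ∏ p ∈ s,
      ((Polynomial.X : Polynomial ℤ) ^ (p.2 : ℕ) - Polynomial.X ^ (p.1 : ℕ)) := by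
    rw [map_prod]
    refine Finset.prod_congr rfl fun p _ => ?_
    rw [map_sub, hφ, aeval_X, aeval_X]
  -- write each factor as (X-1) * e
  choose e1 he1 hv1 using fun p : Σ _ : Fin n, Fin n =>
    pow_sub_pow_factor (b p.2 : ℕ) (b p.1 : ℕ)
  choose e2 he2 hv2 using fun p : Σ _ : Fin n, Fin n =>
    pow_sub_pow_factor (p.2 : ℕ) (p.1 : ℕ)
  have hX1 : (Polynomial.X - 1 : Polynomial ℤ) ≠ 0 := fun h => by
    simpa using congrArg (Polynomial.eval 0) h
  have hcancel : (∏ p ∈ s, e1 p) = (∏ p ∈ s, e2 p) * φ Q := by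
    have key : (Polynomial.X - 1 : Polynomial ℤ) ^ s.card * ∏ p ∈ s, e1 p
        = (Polynomial.X - 1 : Polynomial ℤ) ^ s.card * ((∏ p ∈ s, e2 p) * φ Q) := by
      calc (Polynomial.X - 1 : Polynomial ℤ) ^ s.card * ∏ p ∈ s, e1 p
          = ∏ p ∈ s, ((Polynomial.X - 1) * e1 p) := by
            rw [Finset.prod_mul_distrib, Finset.prod_const]
        _ = φ D := by rw [hφD]; exact Finset.prod_congr rfl fun p _ => (he1 p).symm
        _ = φ (∏ p ∈ s, (X p.2 - X p.1 : MvPolynomial (Fin n) ℤ)) * φ Q := by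
            rw [hQ, _root_.map_mul]
        _ = (∏ p ∈ s, ((Polynomial.X - 1) * e2 p)) * φ Q := by
            rw [hφV]
            congr 1
            exact Finset.prod_congr rfl fun p _ => he2 p
        _ = (Polynomial.X - 1 : Polynomial ℤ) ^ s.card * ((∏ p ∈ s, e2 p) * φ Q) := by
            rw [Finset.prod_mul_distrib, Finset.prod_const, mul_assoc]
    exact mul_left_cancel₀ (pow_ne_zero _ hX1) key
  -- evaluate at 1
  have heval : (∏ p ∈ s, ((b p.2 : ℤ) - (b p.1 : ℤ)))
      = (∏ p ∈ s, ((p.2 : ℤ) - (p.1 : ℤ))) * (φ Q).eval 1 := by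
    have := congrArg (Polynomial.eval 1) hcancel
    rwa [Polynomial.eval_mul, Polynomial.eval_prod, Polynomial.eval_prod,
      Finset.prod_congr rfl (fun p _ => hv1 p),
      Finset.prod_congr rfl (fun p _ => hv2 p)] at this
  have hNZ : Prime (N : ℤ) := Nat.prime_iff_prime_int.mp hN
  -- N does not divide the Vandermonde-type product
  have hVB : ¬ (N : ℤ) ∣ ∏ p ∈ s, ((b p.2 : ℤ) - (b p.1 : ℤ)) := by
    intro hdvd'
    obtain ⟨p, hp, hpd⟩ := hNZ.exists_mem_finset_dvd hdvd'
    have h1 : ((b p.2 : ℕ) : ℤ) < N := by exact_mod_cast (b p.2).isLt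
    have h2 : ((b p.1 : ℕ) : ℤ) < N := by exact_mod_cast (b p.1).isLt
    have h3 : (0 : ℤ) ≤ ((b p.2 : ℕ) : ℤ) := by positivity
    have h4 : (0 : ℤ) ≤ ((b p.1 : ℕ) : ℤ) := by positivity
    have hne : ((b p.2 : ℕ) : ℤ) - ((b p.1 : ℕ) : ℤ) ≠ 0 := by
      intro h0
      have hq : (b p.2 : ℕ) = (b p.1 : ℕ) := by omega
      exact (hmem p hp).ne' (hb (Fin.ext hq))
    have hle := Int.le_of_dvd (abs_pos.mpr hne) ((dvd_abs _ _).mpr hpd)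
    have habs : |((b p.2 : ℕ) : ℤ) - ((b p.1 : ℕ) : ℤ)| < N := abs_sub_lt_iff.mpr (by omega)
    exact absurd hle (not_le.mpr habs)
  -- hence N does not divide Q(1,...,1)
  have hQ1 : ¬ (N : ℤ) ∣ (φ Q).eval 1 := fun h => hVB (heval ▸ h.mul_left _)
  -- now substitute `X i := ζ^(a i)`
  set χ : MvPolynomial (Fin n) ℤ →ₐ[ℤ] ℂ := aeval (fun i : Fin n => ζ ^ (a i : ℕ)) with hχ
  have hχD : χ D = Matrix.det (Matrix.of fun i j : Fin n => ζ ^ ((a i : ℕ) * (b j : ℕ))) := by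
    have hmap : χ D = Matrix.det ((Matrix.of fun i j : Fin n =>
        (X i : MvPolynomial (Fin n) ℤ) ^ (b j : ℕ)).map χ) := by rw [hD, AlgHom.map_det, AlgHom.mapMatrix_apply]
    rw [hmap]
    congr 1
    funext i j
    simp only [Matrix.map_apply, Matrix.of_apply, map_pow, hχ, aeval_X, ← pow_mul]
  have hχV : χ (∏ p ∈ s, (X p.2 - X p.1 : MvPolynomial (Fin n) ℤ)) ≠ 0 := by
    rw [map_prod]
    refine Finset.prod_ne_zero_iff.mpr fun p hp => ?_
    rw [map_sub, hχ, aeval_X, aeval_X]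
    refine sub_ne_zero.mpr fun hcon => ?_
    have := hζ.pow_inj (a p.2).isLt (a p.1).isLt hcon
    exact (hmem p hp).ne' (ha (Fin.ext this))
  have hχQ : χ Q ≠ 0 := by
    intro h0
    set G : Polynomial ℤ :=
      aeval (fun i : Fin n => (Polynomial.X : Polynomial ℤ) ^ (a i : ℕ)) Q with hG
    have hGζ : Polynomial.aeval ζ G = 0 := by
      have hfun : (fun i : Fin n =>
          Polynomial.aeval ζ ((Polynomial.X : Polynomial ℤ) ^ (a i : ℕ)))
          = fun i : Fin n => ζ ^ (a i : ℕ) := by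
        funext i; rw [map_pow, Polynomial.aeval_X]
      rw [hG, ← AlgHom.comp_apply, comp_aeval, hfun, ← hχ, h0]
    have hint : IsIntegral ℤ ζ := hζ.isIntegral hN.pos
    have hdvd' := minpoly.isIntegrallyClosed_dvd hint hGζ
    rw [← Polynomial.cyclotomic_eq_minpoly hζ hN.pos] at hdvd'
    obtain ⟨h, hh⟩ := hdvd'
    have hG1 : G.eval 1 = (N : ℤ) * h.eval 1 := by
      rw [hh, Polynomial.eval_mul, Polynomial.eval_one_cyclotomic_prime]
    -- but G.eval 1 = (φ Q).eval 1
    have hsame : G.eval 1 = (φ Q).eval 1 := by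
      have hfun1 : (fun i : Fin n =>
          Polynomial.aeval (1 : ℤ) ((Polynomial.X : Polynomial ℤ) ^ (a i : ℕ)))
          = fun _ : Fin n => (1 : ℤ) := by
        funext i; rw [map_pow, Polynomial.aeval_X, one_pow]
      have hfun2 : (fun i : Fin n =>
          Polynomial.aeval (1 : ℤ) ((Polynomial.X : Polynomial ℤ) ^ (i : ℕ)))
          = fun _ : Fin n => (1 : ℤ) := by
        funext i; rw [map_pow, Polynomial.aeval_X, one_pow]
      have c1 : Polynomial.eval 1 (G) = aeval (fun _ : Fin n => (1 : ℤ)) Q := by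
        rw [hG, ← Polynomial.coe_aeval_eq_eval, ← AlgHom.comp_apply, comp_aeval, hfun1]
      have c2 : Polynomial.eval 1 (φ Q) = aeval (fun _ : Fin n => (1 : ℤ)) Q := by
        rw [hφ, ← Polynomial.coe_aeval_eq_eval, ← AlgHom.comp_apply, comp_aeval, hfun2]
      rw [c1, c2]
    exact hQ1 ⟨h.eval 1, by rw [← hsame, hG1]⟩
  rw [← hχD, hQ, _root_.map_mul]
  exact mul_ne_zero hχV hχQ

lemma dftMatrix_apply (N : ℕ) (hN : 0 < N) (j k : Fin N) :
    dftMatrix N j k = ((1 / Real.sqrt N : ℝ) : ℂ)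
      * Complex.exp (-2 * Real.pi * Complex.I / N) ^ ((j : ℕ) * (k : ℕ)) := by
  rw [dftMatrix, Matrix.of_apply, ← Complex.exp_nat_mul]
  congr 1
  push_cast
  ring

lemma isPrimitiveRoot_dft (N : ℕ) (hN : 0 < N) :
    IsPrimitiveRoot (Complex.exp (-2 * Real.pi * Complex.I / N)) N := by
  have h := Complex.isPrimitiveRoot_exp N hN.ne'
  have : Complex.exp (-2 * Real.pi * Complex.I / N)
      = (Complex.exp (2 * Real.pi * Complex.I / N))⁻¹ := by
    rw [← Complex.exp_neg]
    congr 1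
    ring
  rw [this]
  exact h.inv

lemma det_dft_submatrix_ne_zero {N n : ℕ} (hN : N.Prime) (hn : n ≤ N)
    (u v : Fin n ↪ Fin N) : ((dftMatrix N).submatrix ⇑u ⇑v).det ≠ 0 := by
  have hpos : 0 < N := hN.pos
  set ζ := Complex.exp (-2 * Real.pi * Complex.I / N) with hζdef
  have hmat : (dftMatrix N).submatrix ⇑u ⇑v
      = ((1 / Real.sqrt N : ℝ) : ℂ) • Matrix.of (fun i j : Fin n =>
          ζ ^ ((u i : ℕ) * (v j : ℕ))) := by
    funext i j
    rw [Matrix.submatrix_apply, dftMatrix_apply N hpos, Matrix.smul_apply, Matrix.of_apply,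
      smul_eq_mul]
  rw [hmat, Matrix.det_smul]
  refine mul_ne_zero (pow_ne_zero _ ?_) (det_zeta_pow_ne_zero hN hn
    (isPrimitiveRoot_dft N hpos) u.injective v.injective)
  rw [Ne, Complex.ofReal_eq_zero, div_eq_zero_iff]
  push_neg
  exact ⟨one_ne_zero, Real.sqrt_ne_zero'.mpr (by exact_mod_cast hpos)⟩

/-- Let `N` be prime, `R` a set of `P` rows (the embedding `r`), and `1 ≤ S ≤ P − 1`.
If `C₁`, `C₂` are distinct `S`-element column sets (embeddings `c₁`, `c₂` with distinct
ranges), then the set of `h ∈ ℂ^S` such that `F(R,C₁)·h` lies in the column space of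
`F(R,C₂)` is a proper linear subspace of `ℂ^S`; in particular it has Lebesgue measure
zero (`ℂ^S` being identified with `ℝ^{2S}`). -/
theorem dft_unidentifiable_set_null (N P S : ℕ) (hN : N.Prime)
    (hS : 1 ≤ S) (hSP : S + 1 ≤ P) (r : Fin P ↪ Fin N)
    (c₁ c₂ : Fin S ↪ Fin N) (hne : Set.range (⇑c₁) ≠ Set.range (⇑c₂)) :
    (∃ W : Submodule ℂ (Fin S → ℂ),
        (W : Set (Fin S → ℂ)) =
          {h : Fin S → ℂ |
            ((dftMatrix N).submatrix (⇑r) (⇑c₁)).mulVec h ∈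
              Submodule.span ℂ
                (Set.range fun j : Fin S => fun i : Fin P =>
                  dftMatrix N (r i) (c₂ j))} ∧
        W ≠ ⊤) ∧
      volume
        {h : Fin S → ℂ |
          ((dftMatrix N).submatrix (⇑r) (⇑c₁)).mulVec h ∈
            Submodule.span ℂ
              (Set.range fun j : Fin S => fun i : Fin P =>
                dftMatrix N (r i) (c₂ j))} = 0 := by
  classical
  set A := (dftMatrix N).submatrix (⇑r) (⇑c₁) with hA
  set T := Submodule.span ℂ
      (Set.range fun j : Fin S => fun i : Fin P => dftMatrix N (r i) (c₂ j)) with hT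
  set W : Submodule ℂ (Fin S → ℂ) := T.comap A.mulVecLin with hW
  have hset : (W : Set (Fin S → ℂ)) = {h : Fin S → ℂ | A.mulVec h ∈ T} := by
    ext h
    simp only [hW, SetLike.mem_coe, Submodule.mem_comap, Matrix.mulVecLin_apply,
      Set.mem_setOf_eq]
  have hPN : P ≤ N := by
    have := Fintype.card_le_of_embedding r
    simpa using this
  have hWtop : W ≠ ⊤ := by
    intro htop
    have hall : ∀ h : Fin S → ℂ, A.mulVec h ∈ T := by
      intro h
      have : h ∈ W := by rw [htop]; trivial
      rw [hW, Submodule.mem_comap, Matrix.mulVecLin_apply] at this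
      exact this
    -- a column index in c₁ but not in c₂
    obtain ⟨j₀, hj₀⟩ : ∃ j₀ : Fin S, c₁ j₀ ∉ Set.range ⇑c₂ := by
      by_contra hcon
      push_neg at hcon
      apply hne
      choose g hg using fun j => hcon j
      have hginj : Function.Injective g := fun s t hst => by
        apply c₁.injective
        rw [← hg s, ← hg t, hst]
      have hgsurj : Function.Surjective g := Finite.surjective_of_injective hginj
      apply Set.Subset.antisymm
      · rintro x ⟨j, rfl⟩
        exact ⟨g j, hg j⟩
      · rintro x ⟨t, rfl⟩
        obtain ⟨j, rfl⟩ := hgsurj t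
        exact ⟨j, (hg j).symm⟩
    -- extended column embedding
    set f : Fin (S + 1) → Fin N := fun t =>
      if h : (t : ℕ) < S then c₂ ⟨t, h⟩ else c₁ j₀ with hf
    have hfinj : Function.Injective f := by
      intro s t hst
      rcases lt_or_ge (s : ℕ) S with hs1 | hs1 <;> rcases lt_or_ge (t : ℕ) S with ht1 | ht1
      · rw [hf] at hst
        simp only [dif_pos hs1, dif_pos ht1] at hst
        have := c₂.injective hst
        have hval : (s : ℕ) = (t : ℕ) := by simpa using congrArg Fin.val this
        exact Fin.ext hval
      · exact absurd ⟨⟨s, hs1⟩, by rw [hf] at hst; simpa [dif_pos hs1, dif_neg (not_lt.mpr ht1)]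
          using hst⟩ hj₀
      · exact absurd ⟨⟨t, ht1⟩, by rw [hf] at hst; simpa [dif_pos ht1, dif_neg (not_lt.mpr hs1)]
          using hst.symm⟩ hj₀
      · have hs2 : (s : ℕ) = S := by omega
        have ht2 : (t : ℕ) = S := by omega
        exact Fin.ext (hs2.trans ht2.symm)
    set c₃ : Fin (S + 1) ↪ Fin N := ⟨f, hfinj⟩ with hc₃
    set ρ : Fin (S + 1) → Fin P := Fin.castLE hSP with hρ
    set rr : Fin (S + 1) ↪ Fin N := ⟨⇑r ∘ ρ, r.injective.comp (Fin.castLE_injective hSP)⟩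
    have hdet : ((dftMatrix N).submatrix ⇑rr ⇑c₃).det ≠ 0 :=
      det_dft_submatrix_ne_zero hN (le_trans hSP hPN) rr c₃
    -- the S+1 long columns
    set u : Fin (S + 1) → (Fin P → ℂ) := fun j => fun i => dftMatrix N (r i) (c₃ j) with hu
    have hui : LinearIndependent ℂ u := by
      apply LinearIndependent.of_comp (LinearMap.funLeft ℂ ℂ ρ)
      have hcomp : (⇑(LinearMap.funLeft ℂ ℂ ρ)) ∘ u
          = fun j => ((dftMatrix N).submatrix ⇑rr ⇑c₃)ᵀ j := by
        funext j i
        rfl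
      rw [hcomp]
      exact Matrix.linearIndependent_cols_iff_isUnit.mpr
        ((Matrix.isUnit_iff_isUnit_det _).mpr (Ne.isUnit hdet))
    have humem : ∀ j, u j ∈ T := by
      intro j
      by_cases hjS : (j : ℕ) < S
      · apply Submodule.subset_span
        refine ⟨⟨j, hjS⟩, ?_⟩
        funext i
        show dftMatrix N (r i) (c₂ ⟨j, hjS⟩) = dftMatrix N (r i) (c₃ j)
        rw [show c₃ j = c₂ ⟨j, hjS⟩ from dif_pos hjS]
      · have hc : c₃ j = c₁ j₀ := dif_neg hjS
        have : u j = A.mulVec (Pi.single j₀ 1) := by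
          funext i
          rw [Matrix.mulVec_single]
          show dftMatrix N (r i) (c₃ j) = A i j₀ * 1
          rw [hc, mul_one]
          rfl
        rw [this]
        exact hall _
    have hle1 : S + 1 ≤ Module.finrank ℂ T := by
      have hsub : LinearIndependent ℂ (fun j => (⟨u j, humem j⟩ : T)) := by
        apply LinearIndependent.of_comp T.subtype
        exact hui
      simpa using hsub.fintype_card_le_finrank
    have hle2 : Module.finrank ℂ T ≤ S := by
      rw [hT]
      refine (finrank_span_le_card _).trans ?_
      rw [Set.toFinset_range]
      exact (Finset.card_image_le).trans (by simp)
    omega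
  refine ⟨⟨W, hset, hWtop⟩, ?_⟩
  rw [← hset]
  have := Measure.addHaar_submodule (volume : Measure (Fin S → ℂ)) (W.restrictScalars ℝ)
    (by simpa [Submodule.restrictScalars_eq_top_iff] using hWtop)
  simpa using this
end

section
/- Let S ≥ 1 and D ≥ 1 be integers, let M ∈ ℂ^{D×S}, y ∈ ℂ^D, μ ∈ ℂ^S, and let Σ ∈ ℂ^{S×S} be Hermitian positive definite. Define ĥ = μ + Σ·Mᴴ·(MΣMᴴ + I_D)^{-1}·(y − Mμ). Then ∫_{ℂ^S} exp(−‖y − Mh‖² − (h−μ)ᴴΣ^{-1}(h−μ)) dh = π^S · det(MᴴM + Σ^{-1})^{-1} · exp(−‖y − Mĥ‖² − (ĥ−μ)ᴴΣ^{-1}(ĥ−μ)), where the integral is with respect to Lebesgue measure on ℂ^S, and in particular MΣMᴴ + I_D and MᴴM + Σ^{-1} are invertible with det(MᴴM + Σ^{-1}) real and positive, and both exponents are real. -/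
open Matrix Complex MeasureTheory
open scoped ComplexOrder

open Matrix Complex MeasureTheory Real
open scoped ComplexOrder

lemma integral_cgauss {a : ℝ} (ha : 0 < a) :
    ∫ z : ℂ, Real.exp (-(a * Complex.normSq z)) = Real.pi / a := by
  have h := Complex.volume_preserving_equiv_real_prod
  have hemb := Complex.measurableEquivRealProd.measurableEmbedding
  have key := h.integral_comp hemb (fun p : ℝ × ℝ => Real.exp (-(a * (p.1 ^ 2 + p.2 ^ 2))))
  rw [show (fun z : ℂ => Real.exp (-(a * Complex.normSq z)))
      = fun z : ℂ => Real.exp (-(a * ((Complex.measurableEquivRealProd z).1 ^ 2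
        + (Complex.measurableEquivRealProd z).2 ^ 2))) from ?_]
  · rw [key]
    have h2 := MeasureTheory.integral_prod_mul (μ := volume) (ν := volume)
      (f := fun x : ℝ => Real.exp (-a * x ^ 2)) (g := fun x : ℝ => Real.exp (-a * x ^ 2))
    rw [← Measure.volume_eq_prod] at h2
    rw [show (fun p : ℝ × ℝ => Real.exp (-(a * (p.1 ^ 2 + p.2 ^ 2))))
        = fun p : ℝ × ℝ => Real.exp (-a * p.1 ^ 2) * Real.exp (-a * p.2 ^ 2) from by
      funext p; rw [← Real.exp_add]; ring_nf]
    rw [h2, integral_gaussian]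
    exact Real.mul_self_sqrt (by positivity)
  · funext z
    simp [Complex.normSq_apply, sq]

lemma dot_self_re {n : ℕ} (x : Fin n → ℂ) :
    ∑ i, Complex.normSq (x i) = (star x ⬝ᵥ x).re := by
  rw [dotProduct, Complex.re_sum]
  congr 1; funext i
  simp [Pi.star_apply, RCLike.star_def, Complex.normSq_apply, Complex.mul_re]

lemma dot_shift {m n : ℕ} (B : Matrix (Fin m) (Fin n) ℂ) (a : Fin n → ℂ) (b : Fin m → ℂ) :
    star (B *ᵥ a) ⬝ᵥ b = star a ⬝ᵥ (Bᴴ *ᵥ b) := by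
  rw [star_mulVec, dotProduct_mulVec]

lemma unitary_mulVec_measurePreserving {S : ℕ} (hS : 1 ≤ S)
    {U : Matrix (Fin S) (Fin S) ℂ} (hU : Uᴴ * U = 1) :
    ∀ f : (Fin S → ℂ) → ℝ, ∫ v, f v = ∫ w, f (U.mulVec w) := by
  have hU2 : U * Uᴴ = 1 := mul_eq_one_comm.mp hU
  letI : Invertible U := ⟨Uᴴ, hU, hU2⟩
  set e : (Fin S → ℂ) ≃ₗ[ℂ] (Fin S → ℂ) := Matrix.toLinearEquiv' U ‹_›
  set eR : (Fin S → ℂ) ≃ₗ[ℝ] (Fin S → ℂ) := e.restrictScalars ℝ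
  have hfun : ⇑(eR.toLinearMap) = fun w : Fin S → ℂ => U.mulVec w := rfl
  have hdet : LinearMap.det (eR.toLinearMap) ≠ 0 := (LinearEquiv.isUnit_det' eR).ne_zero
  have hcont : Continuous fun w : Fin S → ℂ => U.mulVec w :=
    LinearMap.continuous_of_finiteDimensional (eR.toLinearMap)
  have hmap := Measure.map_linearMap_addHaar_eq_smul_addHaar volume hdet
  rw [hfun] at hmap
  -- norm preservation
  have hnorm : ∀ x : Fin S → ℂ, ∑ i, Complex.normSq ((U *ᵥ x) i) = ∑ i, Complex.normSq (x i) := by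
    intro x
    rw [dot_self_re, dot_self_re, dot_shift, Matrix.mulVec_mulVec, hU, Matrix.one_mulVec]
  set E : Set (Fin S → ℂ) := {x | ∑ i, Complex.normSq (x i) ≤ 1} with hE
  have hEclosed : IsClosed E := by
    apply isClosed_le _ continuous_const
    exact continuous_finset_sum _ fun i _ =>
      Complex.continuous_normSq.comp (continuous_apply i)
  have hEsub : E ⊆ Metric.closedBall 0 1 := by
    intro x hx
    rw [Metric.mem_closedBall, dist_zero_right]
    refine (pi_norm_le_iff_of_nonneg zero_le_one).2 fun i => ?_
    have h1 : Complex.normSq (x i) ≤ 1 :=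
      le_trans (Finset.single_le_sum (fun j _ => Complex.normSq_nonneg (x j))
        (Finset.mem_univ i)) hx
    have h2 : ‖x i‖ ^ 2 = Complex.normSq (x i) := Complex.sq_norm (x i)
    nlinarith [norm_nonneg (x i)]
  have hr : (0:ℝ) < Real.sqrt (1 / S) := Real.sqrt_pos.2 (by positivity)
  have hEball : Metric.ball (0 : Fin S → ℂ) (Real.sqrt (1 / S)) ⊆ E := by
    intro x hx
    rw [Metric.mem_ball, dist_zero_right] at hx
    have hb : ∀ i, Complex.normSq (x i) ≤ ‖x‖ ^ 2 := by
      intro i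
      rw [← Complex.sq_norm]
      have h1 := norm_le_pi_norm x i
      have h2 : ‖x i‖ = ‖x i‖ := rfl
      nlinarith [norm_nonneg (x i), norm_nonneg x]
    have : ∑ i, Complex.normSq (x i) ≤ S * ‖x‖ ^ 2 := by
      calc ∑ i, Complex.normSq (x i) ≤ ∑ _i : Fin S, ‖x‖ ^ 2 := Finset.sum_le_sum fun i _ => hb i
      _ = S * ‖x‖ ^ 2 := by simp [mul_comm]
    have hx2 : ‖x‖ ^ 2 < 1 / S := by
      have := Real.sq_sqrt (le_of_lt (show (0:ℝ) < 1/S by positivity))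
      nlinarith [norm_nonneg x]
    have : (S:ℝ) * ‖x‖ ^ 2 < 1 := by
      have hSpos : (0:ℝ) < S := by exact_mod_cast hS
      calc (S:ℝ) * ‖x‖ ^ 2 < S * (1/S) := by exact mul_lt_mul_of_pos_left hx2 hSpos
      _ = 1 := by field_simp
    exact le_of_lt (lt_of_le_of_lt ‹∑ i, Complex.normSq (x i) ≤ S * ‖x‖ ^ 2› this)
  have hEpos : 0 < volume E :=
    lt_of_lt_of_le (Metric.measure_ball_pos volume 0 hr) (measure_mono hEball)
  have hEfin : volume E < ⊤ :=
    lt_of_le_of_lt (measure_mono hEsub) (measure_closedBall_lt_top)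
  have hpre : (fun w : Fin S → ℂ => U.mulVec w) ⁻¹' E = E := by
    ext x; simp only [Set.mem_preimage, hE, Set.mem_setOf_eq, hnorm x]
  have h1 : (Measure.map (fun w : Fin S → ℂ => U.mulVec w) volume) E = volume E := by
    rw [Measure.map_apply hcont.measurable hEclosed.measurableSet, hpre]
  rw [hmap] at h1
  have hc : ENNReal.ofReal |(LinearMap.det eR.toLinearMap)⁻¹| = 1 := by
    rw [Measure.smul_apply, smul_eq_mul] at h1
    exact (ENNReal.mul_eq_right (ne_of_gt hEpos) (ne_of_lt hEfin)).mp h1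
  have hmapeq : Measure.map (fun w : Fin S → ℂ => U.mulVec w) volume = volume := by
    rw [hmap, hc, one_smul]
  intro f
  set em : (Fin S → ℂ) ≃ᵐ (Fin S → ℂ) :=
    eR.toContinuousLinearEquiv.toHomeomorph.toMeasurableEquiv with hem
  have hcoe : ⇑em = fun w : Fin S → ℂ => U.mulVec w := rfl
  have := MeasureTheory.integral_map_equiv (μ := volume) em f
  rw [hcoe, hmapeq] at this
  rw [this]

lemma gauss_quad {S : ℕ} (hS : 1 ≤ S) {A : Matrix (Fin S) (Fin S) ℂ} (hA : A.PosDef) :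
    ∫ v : Fin S → ℂ, Real.exp (-(star v ⬝ᵥ A *ᵥ v).re) = Real.pi ^ S * (A.det.re)⁻¹ := by
  classical
  set U : Matrix (Fin S) (Fin S) ℂ := (hA.1.eigenvectorUnitary : Matrix (Fin S) (Fin S) ℂ) with hUdef
  have hU : Uᴴ * U = 1 := by
    rw [← Matrix.star_eq_conjTranspose]
    exact hA.1.eigenvectorUnitary.prop.1
  set d : Fin S → ℝ := hA.1.eigenvalues with hddef
  have hd : ∀ i, 0 < d i := hA.eigenvalues_pos
  set dd : Fin S → ℂ := (RCLike.ofReal ∘ hA.1.eigenvalues : Fin S → ℂ) with hdd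
  have hspec : A = U * diagonal dd * Uᴴ := by
    rw [← Matrix.star_eq_conjTranspose]
    exact hA.1.spectral_theorem
  have hAU : A * U = U * diagonal dd := by
    rw [hspec, mul_assoc, mul_assoc, hU, mul_one]
  have key : ∀ w : Fin S → ℂ,
      (star (U *ᵥ w) ⬝ᵥ A *ᵥ (U *ᵥ w)) = star w ⬝ᵥ (diagonal dd *ᵥ w) := by
    intro w
    rw [Matrix.mulVec_mulVec, hAU, ← Matrix.mulVec_mulVec, dot_shift,
      Matrix.mulVec_mulVec, hU, Matrix.one_mulVec]
  have hre : ∀ w : Fin S → ℂ,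
      (star w ⬝ᵥ diagonal dd *ᵥ w).re = ∑ i, d i * Complex.normSq (w i) := by
    intro w
    rw [dotProduct, Complex.re_sum]
    congr 1; funext i
    have : (diagonal dd *ᵥ w) i = dd i * w i := Matrix.mulVec_diagonal dd w i
    rw [this]
    have : star w i * (dd i * w i) = ((d i * Complex.normSq (w i) : ℝ) : ℂ) := by
      push_cast
      rw [show star w i = starRingEnd ℂ (w i) from rfl]
      rw [show dd i = ((d i : ℝ) : ℂ) from rfl]
      rw [Complex.normSq_eq_conj_mul_self]
      ring
    rw [this, Complex.ofReal_re]
  rw [unitary_mulVec_measurePreserving hS hU (fun v => Real.exp (-(star v ⬝ᵥ A *ᵥ v).re))]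
  have : (fun w : Fin S → ℂ => Real.exp (-(star (U *ᵥ w) ⬝ᵥ A *ᵥ (U *ᵥ w)).re))
      = fun w : Fin S → ℂ => ∏ i, Real.exp (-(d i * Complex.normSq (w i))) := by
    funext w
    rw [key, hre, ← Real.exp_sum]
    congr 1
    rw [← Finset.sum_neg_distrib]
  rw [show (∫ w : Fin S → ℂ, Real.exp (-(star (U *ᵥ w) ⬝ᵥ A *ᵥ (U *ᵥ w)).re))
      = ∫ w : Fin S → ℂ, ∏ i, Real.exp (-(d i * Complex.normSq (w i))) from by rw [this]]
  rw [MeasureTheory.integral_fintype_prod_volume_eq_prod (ι := Fin S)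
    (f := fun i (z : ℂ) => Real.exp (-(d i * Complex.normSq z)))]
  have : ∀ i ∈ Finset.univ, (∫ z : ℂ, Real.exp (-(d i * Complex.normSq z))) = Real.pi / d i :=
    fun i _ => integral_cgauss (hd i)
  rw [Finset.prod_congr rfl this, Finset.prod_div_distrib, Finset.prod_const]
  have hdet : A.det.re = ∏ i, d i := by
    rw [hA.1.det_eq_prod_eigenvalues, ← hddef]
    norm_cast
  rw [hdet, Finset.card_univ, Fintype.card_fin, div_eq_mul_inv]

lemma herm_qform_conj {n : ℕ} {Q : Matrix (Fin n) (Fin n) ℂ} (hQ : Qᴴ = Q) (v : Fin n → ℂ) :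
    (star v ⬝ᵥ Q *ᵥ v).im = 0 := by
  rw [← Complex.conj_eq_iff_im]
  have h1 : star (star v ⬝ᵥ Q *ᵥ v) = star (Q *ᵥ v) ⬝ᵥ v := by
    rw [Matrix.star_dotProduct, star_star]
  have h2 : star (Q *ᵥ v) ⬝ᵥ v = star v ⬝ᵥ Q *ᵥ v := by
    rw [dot_shift, hQ]
  exact (h1.trans h2)

lemma complete_square {S D : ℕ} (M : Matrix (Fin D) (Fin S) ℂ) (y : Fin D → ℂ) (μ : Fin S → ℂ)
    (P A : Matrix (Fin S) (Fin S) ℂ) (hAdef : A = Mᴴ * M + P) (hPh : Pᴴ = P)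
    (hh : Fin S → ℂ) (hgrad : A *ᵥ hh = Mᴴ *ᵥ y + P *ᵥ μ) (h : Fin S → ℂ) :
    star (y - M *ᵥ h) ⬝ᵥ (y - M *ᵥ h) + star (h - μ) ⬝ᵥ P *ᵥ (h - μ)
      = star (h - hh) ⬝ᵥ A *ᵥ (h - hh)
        + (star (y - M *ᵥ hh) ⬝ᵥ (y - M *ᵥ hh) + star (hh - μ) ⬝ᵥ P *ᵥ (hh - μ)) := by
  set v := h - hh with hv
  set u := hh - μ with hu
  set w := y - M *ᵥ hh with hw
  have hyM : y - M *ᵥ h = w - M *ᵥ v := by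
    rw [hw, hv, Matrix.mulVec_sub]; abel
  have hhμ : h - μ = v + u := by rw [hv, hu]; abel
  have hAhh : Mᴴ *ᵥ (M *ᵥ hh) + P *ᵥ hh = Mᴴ *ᵥ y + P *ᵥ μ := by
    rw [← hgrad, hAdef, Matrix.add_mulVec, Matrix.mulVec_mulVec]
  have hpu : P *ᵥ u = Mᴴ *ᵥ w := by
    rw [hu, hw, Matrix.mulVec_sub, Matrix.mulVec_sub]
    rw [sub_eq_sub_iff_add_eq_add, add_comm (P *ᵥ hh)]
    exact hAhh
  rw [hyM, hhμ]
  have a1 : star (w - M *ᵥ v) ⬝ᵥ (w - M *ᵥ v)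
      = star w ⬝ᵥ w - star w ⬝ᵥ (M *ᵥ v) - star (M *ᵥ v) ⬝ᵥ w
        + star (M *ᵥ v) ⬝ᵥ (M *ᵥ v) := by
    rw [star_sub, sub_dotProduct, dotProduct_sub, dotProduct_sub, dotProduct_sub]; ring
  have a2 : star (v + u) ⬝ᵥ P *ᵥ (v + u)
      = star v ⬝ᵥ (P *ᵥ v) + star v ⬝ᵥ (P *ᵥ u) + star u ⬝ᵥ (P *ᵥ v) + star u ⬝ᵥ (P *ᵥ u) := by
    rw [star_add, add_dotProduct, Matrix.mulVec_add, dotProduct_add, dotProduct_add]; ring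
  have a3 : star (M *ᵥ v) ⬝ᵥ (M *ᵥ v) = star v ⬝ᵥ ((Mᴴ * M) *ᵥ v) := by
    rw [dot_shift, Matrix.mulVec_mulVec]
  have a4 : star v ⬝ᵥ (A *ᵥ v) = star v ⬝ᵥ ((Mᴴ * M) *ᵥ v) + star v ⬝ᵥ (P *ᵥ v) := by
    rw [hAdef, Matrix.add_mulVec, dotProduct_add]
  have a5 : star v ⬝ᵥ (P *ᵥ u) = star v ⬝ᵥ (Mᴴ *ᵥ w) := by rw [hpu]
  have a7 : star (M *ᵥ v) ⬝ᵥ w = star v ⬝ᵥ (Mᴴ *ᵥ w) := dot_shift M v w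
  have a6 : star w ⬝ᵥ (M *ᵥ v) = star u ⬝ᵥ (P *ᵥ v) := by
    calc star w ⬝ᵥ (M *ᵥ v) = star (star (M *ᵥ v) ⬝ᵥ w) := by
          rw [Matrix.star_dotProduct]
      _ = star (star v ⬝ᵥ (Mᴴ *ᵥ w)) := by rw [a7]
      _ = star (star v ⬝ᵥ (P *ᵥ u)) := by rw [hpu]
      _ = star (P *ᵥ u) ⬝ᵥ v := by rw [Matrix.star_dotProduct, star_star]
      _ = star u ⬝ᵥ (Pᴴ *ᵥ v) := dot_shift P u v
      _ = star u ⬝ᵥ (P *ᵥ v) := by rw [hPh]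
  linear_combination a1 + a2 - a4 + a3 - a7 + a5 - a6

/-- The complex Gaussian integral identity underlying the maximum-likelihood decoding
metric.  For `M ∈ ℂ^{D×S}`, `y ∈ ℂ^D`, `μ ∈ ℂ^S`, a Hermitian positive definite
`Σ ∈ ℂ^{S×S}`, and `ĥ = μ + ΣMᴴ(MΣMᴴ + I)⁻¹(y − Mμ)`, the matrices `MΣMᴴ + I` and
`MᴴM + Σ⁻¹` are invertible, `det(MᴴM + Σ⁻¹)` is real and positive, the quadratic-form
exponents are real, and
`∫_{ℂ^S} exp(−‖y − Mh‖² − (h−μ)ᴴΣ⁻¹(h−μ)) dh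
   = π^S det(MᴴM + Σ⁻¹)⁻¹ exp(−‖y − Mĥ‖² − (ĥ−μ)ᴴΣ⁻¹(ĥ−μ))`,
the integral being with respect to Lebesgue measure on `ℂ^S ≅ ℝ^{2S}` (normalized so
that `∫_ℂ exp(−|z|²) dz = π`). -/
theorem gaussian_marginalization_integral (S D : ℕ) (hS : 1 ≤ S) (hD : 1 ≤ D)
    (M : Matrix (Fin D) (Fin S) ℂ) (y : Fin D → ℂ) (μ : Fin S → ℂ)
    (Sig : Matrix (Fin S) (Fin S) ℂ) (hSig : Sig.PosDef) :
    IsUnit (M * Sig * Mᴴ + 1) ∧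
      IsUnit (Mᴴ * M + Sig⁻¹) ∧
      (Mᴴ * M + Sig⁻¹).det.im = 0 ∧
      0 < (Mᴴ * M + Sig⁻¹).det.re ∧
      (∀ h : Fin S → ℂ, (star (h - μ) ⬝ᵥ (Sig⁻¹).mulVec (h - μ)).im = 0) ∧
      (∫ h : Fin S → ℂ,
          Real.exp (-(∑ i : Fin D, Complex.normSq ((y - M.mulVec h) i)) -
            (star (h - μ) ⬝ᵥ (Sig⁻¹).mulVec (h - μ)).re)) =
        Real.pi ^ S * ((Mᴴ * M + Sig⁻¹).det.re)⁻¹ *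
          Real.exp
            (-(∑ i : Fin D,
                Complex.normSq
                  ((y - M.mulVec
                      (μ + (Sig * Mᴴ * (M * Sig * Mᴴ + 1)⁻¹).mulVec
                          (y - M.mulVec μ))) i)) -
              (star ((μ + (Sig * Mᴴ * (M * Sig * Mᴴ + 1)⁻¹).mulVec
                    (y - M.mulVec μ)) - μ) ⬝ᵥ
                (Sig⁻¹).mulVec
                  ((μ + (Sig * Mᴴ * (M * Sig * Mᴴ + 1)⁻¹).mulVec
                      (y - M.mulVec μ)) - μ)).re) := by
  classical
  have hP : (Sig⁻¹).PosDef := hSig.inv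
  have hPh : (Sig⁻¹)ᴴ = Sig⁻¹ := hP.isHermitian
  have hC : (M * Sig * Mᴴ + 1).PosDef :=
    Matrix.PosDef.posSemidef_add (hSig.posSemidef.mul_mul_conjTranspose_same M) Matrix.PosDef.one
  have hA : (Mᴴ * M + Sig⁻¹).PosDef :=
    Matrix.PosDef.posSemidef_add (Matrix.posSemidef_conjTranspose_mul_self M) hP
  have hdetpos : (0 : ℂ) < (Mᴴ * M + Sig⁻¹).det := hA.det_pos
  have hdet_im : (Mᴴ * M + Sig⁻¹).det.im = 0 := by
    have := (Complex.lt_def.mp hdetpos).2; simpa using this.symm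
  have hdet_re : 0 < (Mᴴ * M + Sig⁻¹).det.re := by
    have := (Complex.lt_def.mp hdetpos).1; simpa using this
  have hqim : ∀ h : Fin S → ℂ, (star (h - μ) ⬝ᵥ (Sig⁻¹).mulVec (h - μ)).im = 0 :=
    fun h => herm_qform_conj hPh (h - μ)
  refine ⟨hC.isUnit, hA.isUnit, hdet_im, hdet_re, hqim, ?_⟩
  -- notation
  set hh : Fin S → ℂ := μ + (Sig * Mᴴ * (M * Sig * Mᴴ + 1)⁻¹).mulVec (y - M.mulVec μ) with hhdef
  -- gradient identity
  have hSigdet : IsUnit Sig.det := isUnit_iff_ne_zero.mpr (ne_of_gt hSig.det_pos)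
  have hCdet : IsUnit (M * Sig * Mᴴ + 1).det := isUnit_iff_ne_zero.mpr (ne_of_gt hC.det_pos)
  have hASM : (Mᴴ * M + Sig⁻¹) * (Sig * Mᴴ) = Mᴴ * (M * Sig * Mᴴ + 1) := by
    rw [Matrix.add_mul, Matrix.mul_add, Matrix.mul_one]
    rw [show Sig⁻¹ * (Sig * Mᴴ) = Mᴴ from by
      rw [← Matrix.mul_assoc, Matrix.nonsing_inv_mul Sig hSigdet, Matrix.one_mul]]
    rw [← Matrix.mul_assoc, ← Matrix.mul_assoc, Matrix.mul_assoc Mᴴ M Sig]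
  have hkey : (Mᴴ * M + Sig⁻¹) * (Sig * Mᴴ * (M * Sig * Mᴴ + 1)⁻¹) = Mᴴ := by
    rw [← Matrix.mul_assoc, hASM, Matrix.mul_assoc, Matrix.mul_nonsing_inv _ hCdet, Matrix.mul_one]
  have hgrad : (Mᴴ * M + Sig⁻¹) *ᵥ hh = Mᴴ *ᵥ y + Sig⁻¹ *ᵥ μ := by
    rw [hhdef, Matrix.mulVec_add, Matrix.mulVec_mulVec, hkey, Matrix.mulVec_sub,
      Matrix.add_mulVec, Matrix.mulVec_mulVec]
    abel
  -- pointwise exponent identity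
  have hpt : ∀ h : Fin S → ℂ,
      (-(∑ i : Fin D, Complex.normSq ((y - M.mulVec h) i)) -
          (star (h - μ) ⬝ᵥ (Sig⁻¹).mulVec (h - μ)).re)
        = -(star (h - hh) ⬝ᵥ (Mᴴ * M + Sig⁻¹) *ᵥ (h - hh)).re +
          (-(∑ i : Fin D, Complex.normSq ((y - M.mulVec hh) i)) -
            (star (hh - μ) ⬝ᵥ (Sig⁻¹).mulVec (hh - μ)).re) := by
    intro h
    have hcs := complete_square M y μ (Sig⁻¹) (Mᴴ * M + Sig⁻¹) rfl hPh hh hgrad h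
    have := congrArg Complex.re hcs
    rw [Complex.add_re, Complex.add_re, Complex.add_re] at this
    rw [dot_self_re ((y - M.mulVec h)), dot_self_re ((y - M.mulVec hh))]
    linarith [this]
  have hint : (fun h : Fin S → ℂ =>
      Real.exp (-(∑ i : Fin D, Complex.normSq ((y - M.mulVec h) i)) -
        (star (h - μ) ⬝ᵥ (Sig⁻¹).mulVec (h - μ)).re))
      = fun h : Fin S → ℂ =>
        Real.exp (-(star (h - hh) ⬝ᵥ (Mᴴ * M + Sig⁻¹) *ᵥ (h - hh)).re) *
          Real.exp (-(∑ i : Fin D, Complex.normSq ((y - M.mulVec hh) i)) -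
            (star (hh - μ) ⬝ᵥ (Sig⁻¹).mulVec (hh - μ)).re) := by
    funext h
    rw [← Real.exp_add, hpt h]
  rw [hint]
  rw [MeasureTheory.integral_mul_const]
  rw [show (∫ h : Fin S → ℂ,
        Real.exp (-(star (h - hh) ⬝ᵥ (Mᴴ * M + Sig⁻¹) *ᵥ (h - hh)).re))
      = ∫ v : Fin S → ℂ, Real.exp (-(star v ⬝ᵥ (Mᴴ * M + Sig⁻¹) *ᵥ v).re) from
    MeasureTheory.integral_sub_right_eq_self
      (fun x : Fin S → ℂ => Real.exp (-(star x ⬝ᵥ (Mᴴ * M + Sig⁻¹) *ᵥ x).re)) hh]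
  rw [gauss_quad hS hA]
end
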